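/- arXiv:1109.5045 — 9 statements merged into one kernel-verified Lean document; each statement's English description precedes it below -/
import Mathlib

section
/- Let q : ℝ^{2d} → ℂ be a quadratic form with Hamilton map F such that Re q(X) ≥ 0 for all X ∈ ℝ^{2d}. Then the following are equivalent: (i) for every T > 0 the quadratic form X ↦ (1/T)∫₀^T Re q(exp(2t·Im F)X) dt is positive definite on ℝ^{2d}; (ii) the singular space of q is trivial, S = {0}. -/
open Matrix

noncomputable section

/-- The standard symplectic matrix `J = [[0, -I], [I, 0]]` on `R^d ⊕ R^d`. -/
def Jmat (d : ℕ) (R : Type*) [Ring R] :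
    Matrix (Fin d ⊕ Fin d) (Fin d ⊕ Fin d) R :=
  Matrix.fromBlocks 0 (-1) 1 0

/-- The complex quadratic form `X ↦ ⟨X, A X⟩` evaluated on a real vector `X ∈ ℝ^{2d}`. -/
def Qc {d : ℕ} (A : Matrix (Fin d ⊕ Fin d) (Fin d ⊕ Fin d) ℂ)
    (X : Fin d ⊕ Fin d → ℝ) : ℂ :=
  (fun i => (X i : ℂ)) ⬝ᵥ A *ᵥ (fun i => (X i : ℂ))

/-!
Write `Re q(Y) = ⟨Y, M Y⟩` with `M = Re A` positive semidefinite and `N = 2 Im F`. The integrand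
`t ↦ Re q(exp(tN) X)` is continuous and nonnegative, so its average over `[0, T]` vanishes iff
`M exp(tN) X = 0` for all `t ∈ (0, T)`. Differentiating at `t = 0`, resp. summing the exponential
series, this holds iff `M N^k X = 0` for all `k`; by Cayley–Hamilton it suffices to take
`k < 2d`, and since `Re F = -J M` with `J` invertible, `M` may be replaced by `Re F`.
-/

open NormedSpace Polynomial Set

theorem Matrix.mul_pow_mulVec_eq_zero_of_forall_lt_card {R n : Type*} [CommRing R] [Nontrivial R]
    [Fintype n] [DecidableEq n] (B N : Matrix n n R) {v : n → R}
    (h : ∀ k < Fintype.card n, (B * N ^ k) *ᵥ v = 0) (k : ℕ) : (B * N ^ k) *ᵥ v = 0 := by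
  rw [N.pow_eq_aeval_mod_charpoly, aeval_eq_sum_range, Matrix.mul_sum, sum_mulVec]
  refine Finset.sum_eq_zero fun i _ => ?_
  rw [Matrix.mul_smul, smul_mulVec]
  by_cases hi : i < Fintype.card n
  · rw [h i hi, smul_zero]
  · rw [coeff_eq_zero_of_degree_lt, zero_smul]
    calc degree (X ^ k %ₘ N.charpoly) < degree N.charpoly :=
          degree_modByMonic_lt _ N.charpoly_monic
      _ = Fintype.card n := N.charpoly_degree_eq_dim
      _ ≤ i := by exact_mod_cast not_lt.1 hi

theorem Matrix.mul_smul_pow_mulVec_eq_zero_iff {K n : Type*} [Field K] [Fintype n]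
    [DecidableEq n] (B N : Matrix n n K) (v : n → K) {c : K} (hc : c ≠ 0) (k : ℕ) :
    (B * (c • N) ^ k) *ᵥ v = 0 ↔ (B * N ^ k) *ᵥ v = 0 := by
  rw [_root_.smul_pow, Matrix.mul_smul, smul_mulVec, smul_eq_zero, or_iff_right (pow_ne_zero k hc)]

section MatrixExp

/- The calculus of `NormedSpace.exp` needs a normed algebra; the proofs below choose the
`L^∞` operator norm on matrices, which induces their usual topology. -/

variable {n : Type*} [Fintype n] [DecidableEq n]

theorem Matrix.continuous_exp_smul (N : Matrix n n ℝ) :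
    Continuous fun t : ℝ => exp (t • N) := by
  let _ := Matrix.linftyOpNormedRing (n := n) (α := ℝ)
  let _ := Matrix.linftyOpNormedAlgebra (n := n) (R := ℝ) (α := ℝ)
  exact continuous_iff_continuousAt.2 fun t => (hasDerivAt_exp_smul_const N t).continuousAt

theorem Matrix.mul_exp_smul_mulVec_eq_zero (B N : Matrix n n ℝ) {v : n → ℝ}
    (h : ∀ k, (B * N ^ k) *ᵥ v = 0) (t : ℝ) : (B * exp (t • N)) *ᵥ v = 0 := by
  let _ := Matrix.linftyOpNormedRing (n := n) (α := ℝ)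
  let _ := Matrix.linftyOpNormedAlgebra (n := n) (R := ℝ) (α := ℝ)
  let L : Matrix n n ℝ →L[ℝ] (n → ℝ) :=
    LinearMap.toContinuousLinearMap ((mulVecBilin ℝ ℝ).flip v ∘ₗ LinearMap.mulLeft ℝ B)
  have hterms : ∀ k : ℕ, L ((k.factorial : ℝ)⁻¹ • (t • N) ^ k) = 0 := fun k => by
    simp [L, _root_.smul_pow, h]
  exact (L.hasSum (exp_series_hasSum_exp' (𝕂 := ℝ) (t • N))).unique (by simp [hterms])

theorem Matrix.hasDerivAt_mul_exp_smul_mul_mulVec (B N C : Matrix n n ℝ) (v : n → ℝ)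
    (t : ℝ) :
    HasDerivAt (fun s : ℝ => (B * exp (s • N) * C) *ᵥ v)
      ((B * (exp (t • N) * N) * C) *ᵥ v) t := by
  let _ := Matrix.linftyOpNormedRing (n := n) (α := ℝ)
  let _ := Matrix.linftyOpNormedAlgebra (n := n) (R := ℝ) (α := ℝ)
  let L : Matrix n n ℝ →L[ℝ] (n → ℝ) := LinearMap.toContinuousLinearMap
    ((mulVecBilin ℝ ℝ).flip v ∘ₗ LinearMap.mulRight ℝ C ∘ₗ LinearMap.mulLeft ℝ B)
  exact L.hasFDerivAt.comp_hasDerivAt t (hasDerivAt_exp_smul_const N t)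

theorem Matrix.mul_pow_mulVec_eq_zero_of_forall_Ioo (B N : Matrix n n ℝ) {v : n → ℝ} {T : ℝ}
    (hT : 0 < T) (h : ∀ t ∈ Ioo 0 T, (B * exp (t • N)) *ᵥ v = 0) (k : ℕ) :
    (B * N ^ k) *ᵥ v = 0 := by
  set g : ℕ → ℝ → n → ℝ := fun k s => (B * exp (s • N) * N ^ k) *ᵥ v
  have hg : ∀ k t, HasDerivAt (g k) (g (k + 1) t) t := fun k t => by
    have := hasDerivAt_mul_exp_smul_mul_mulVec B N (N ^ k) v t
    rwa [← Matrix.mul_assoc B, Matrix.mul_assoc (B * exp _), ← pow_succ'] at this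
  have hzero : ∀ k, EqOn (g k) 0 (Ioo 0 T) := by
    intro k
    induction k with
    | zero => simpa [g, EqOn] using h
    | succ k ih =>
      intro t ht
      exact (hg k t).unique <| (hasDerivAt_const t 0).congr_of_eventuallyEq <|
        Filter.eventuallyEq_of_mem (Ioo_mem_nhds ht.1 ht.2) ih
  have hcont : Continuous (g k) := continuous_iff_continuousAt.2 fun t => (hg k t).continuousAt
  have h0 : (0 : ℝ) ∈ closure (Ioo 0 T) := by
    rw [closure_Ioo hT.ne]
    exact ⟨le_rfl, hT.le⟩
  simpa [g] using (hzero k).closure hcont continuous_const h0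

theorem Matrix.PosSemidef.integral_exp_smul_pos_iff {M : Matrix n n ℝ} (hM : M.PosSemidef)
    (N : Matrix n n ℝ) (v : n → ℝ) {T : ℝ} (hT : 0 < T) :
    0 < ∫ t in (0 : ℝ)..T, (exp (t • N) *ᵥ v) ⬝ᵥ M *ᵥ (exp (t • N) *ᵥ v) ↔
      ∃ k, (M * N ^ k) *ᵥ v ≠ 0 := by
  constructor
  · intro hpos
    by_contra! hker
    simp [mulVec_mulVec, mul_exp_smul_mulVec_eq_zero M N hker] at hpos
  · rintro ⟨k, hk⟩
    obtain ⟨t, ht, hne⟩ : ∃ t ∈ Ioo 0 T, (M * exp (t • N)) *ᵥ v ≠ 0 := by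
      by_contra! h
      exact hk (mul_pow_mulVec_eq_zero_of_forall_Ioo M N hT h k)
    have hnonneg : ∀ w : n → ℝ, 0 ≤ w ⬝ᵥ M *ᵥ w := by
      simpa using hM.dotProduct_mulVec_nonneg
    have hzero : ∀ w : n → ℝ, w ⬝ᵥ M *ᵥ w = 0 ↔ M *ᵥ w = 0 := by
      simpa using hM.dotProduct_mulVec_zero_iff
    have hY := (continuous_exp_smul N).matrix_mulVec (continuous_const (y := v))
    refine intervalIntegral.integral_pos hT
      (hY.dotProduct (continuous_const.matrix_mulVec hY)).continuousOn (fun s _ => hnonneg _)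
      ⟨t, Ioo_subset_Icc_self ht, (hnonneg _).lt_of_ne' ?_⟩
    exact (hzero _).not.2 (by rwa [mulVec_mulVec])

end MatrixExp

section

variable {d : ℕ}

theorem Jmat_mul_self (R : Type*) [Ring R] : Jmat d R * Jmat d R = -1 := by
  simp [Jmat, fromBlocks_multiply, ← fromBlocks_one, fromBlocks_neg]

theorem Jmat_mulVec_eq_zero_iff {R : Type*} [Ring R] (w : Fin d ⊕ Fin d → R) :
    Jmat d R *ᵥ w = 0 ↔ w = 0 :=
  ⟨fun h => by simpa [Jmat_mul_self, neg_mulVec] using congrArg (Jmat d R *ᵥ ·) h,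
    fun h => by simp [h]⟩

theorem map_re_neg_Jmat_mul (A : Matrix (Fin d ⊕ Fin d) (Fin d ⊕ Fin d) ℂ) :
    (-(Jmat d ℂ) * A).map Complex.re = -(Jmat d ℝ * A.map Complex.re) := by
  ext (i | i) (j | j) <;> simp [Jmat, fromBlocks, Matrix.mul_apply, Fintype.sum_sum_type,
    Matrix.one_apply]

theorem re_Qc (A : Matrix (Fin d ⊕ Fin d) (Fin d ⊕ Fin d) ℂ) (X : Fin d ⊕ Fin d → ℝ) :
    (Qc A X).re = X ⬝ᵥ A.map Complex.re *ᵥ X := by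
  simp [Qc, dotProduct, mulVec, Complex.re_sum]

theorem posSemidef_map_re {A : Matrix (Fin d ⊕ Fin d) (Fin d ⊕ Fin d) ℂ} (hA : A.IsSymm)
    (hpos : ∀ X, 0 ≤ (Qc A X).re) : (A.map Complex.re).PosSemidef := by
  refine .of_dotProduct_mulVec_nonneg ?_ fun X => by simpa [re_Qc] using hpos X
  rw [IsHermitian, conjTranspose_eq_transpose_of_trivial, ← transpose_map, hA]

end

theorem statement0_general (d : ℕ)
    (A F : Matrix (Fin d ⊕ Fin d) (Fin d ⊕ Fin d) ℂ)
    (hA : A.IsSymm)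
    (hF : F = -(Jmat d ℂ) * A)
    (hpos : ∀ X : Fin d ⊕ Fin d → ℝ, 0 ≤ (Qc A X).re) :
    ((∀ T : ℝ, 0 < T → ∀ X : Fin d ⊕ Fin d → ℝ, X ≠ 0 →
        0 < (1 / T) * ∫ t in (0:ℝ)..T,
          (Qc A (NormedSpace.exp ((2 * t) • F.map Complex.im) *ᵥ X)).re)
      ↔ (∀ X : Fin d ⊕ Fin d → ℝ,
          (∀ k : ℕ, k ≤ 2 * d - 1 →
            (F.map Complex.re * (F.map Complex.im) ^ k) *ᵥ X = 0) → X = 0)) := by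
  set ImF := F.map Complex.im
  have hflow : ∀ t : ℝ, (2 * t) • ImF = t • (2 : ℝ) • ImF := fun t => by
    rw [smul_smul, mul_comm]
  have haverage : ∀ T, 0 < T → ∀ X,
      (0 < (1 / T) * ∫ t in (0:ℝ)..T, (Qc A (exp ((2 * t) • ImF) *ᵥ X)).re) ↔
        ∃ k, (A.map Complex.re * ImF ^ k) *ᵥ X ≠ 0 := by
    intro T hT X
    simp_rw [hflow, re_Qc, mul_pos_iff_of_pos_left (one_div_pos.2 hT),
      (posSemidef_map_re hA hpos).integral_exp_smul_pos_iff _ _ hT, ne_eq,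
      mul_smul_pow_mulVec_eq_zero_iff _ _ _ (two_ne_zero (α := ℝ))]
  have hsingular : ∀ X, (∀ k ≤ 2 * d - 1, (F.map Complex.re * ImF ^ k) *ᵥ X = 0) ↔
      ∀ k, (A.map Complex.re * ImF ^ k) *ᵥ X = 0 := by
    intro X
    simp_rw [← mulVec_mulVec, hF, map_re_neg_Jmat_mul, neg_mulVec, neg_eq_zero, ← mulVec_mulVec,
      Jmat_mulVec_eq_zero_iff, mulVec_mulVec]
    refine ⟨fun h => mul_pow_mulVec_eq_zero_of_forall_lt_card _ _ fun k hk => h k ?_,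
      fun h k _ => h k⟩
    simp only [Fintype.card_sum, Fintype.card_fin] at hk
    omega
  simp_rw [hsingular]
  constructor
  · intro h X hX
    by_contra hX0
    obtain ⟨k, hk⟩ := (haverage 1 one_pos X).1 (h 1 one_pos X hX0)
    exact hk (hX k)
  · intro h T hT X hX0
    rw [haverage T hT]
    by_contra! hk
    exact hX0 (h X hk)

/-- For a quadratic form `q(X) = ⟨X, A X⟩` on `ℝ^{2d}` with Hamilton map
`F = -J A` and `Re q ≥ 0`, the time averages `⟨Re q⟩_{Im q, T}` are positive definite for
every `T > 0` if and only if the singular space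
`S = (⋂_{k=0}^{2d-1} ker (Re F ∘ (Im F)^k)) ∩ ℝ^{2d}` is trivial. -/
theorem statement0 (d : ℕ) (hd : 0 < d)
    (A F : Matrix (Fin d ⊕ Fin d) (Fin d ⊕ Fin d) ℂ)
    (hA : A.IsSymm)
    (hF : F = -(Jmat d ℂ) * A)
    (hpos : ∀ X : Fin d ⊕ Fin d → ℝ, 0 ≤ (Qc A X).re) :
    ((∀ T : ℝ, 0 < T → ∀ X : Fin d ⊕ Fin d → ℝ, X ≠ 0 →
        0 < (1 / T) * ∫ t in (0:ℝ)..T,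
          (Qc A (NormedSpace.exp ((2 * t) • F.map Complex.im) *ᵥ X)).re)
      ↔ (∀ X : Fin d ⊕ Fin d → ℝ,
          (∀ k : ℕ, k ≤ 2 * d - 1 →
            (F.map Complex.re * (F.map Complex.im) ^ k) *ᵥ X = 0) → X = 0)) :=
  statement0_general d A F hA hF hpos

end
end

section
/- Let H : ℝ^{2d} → ℝ^{2d} be a real linear map, skew with respect to σ (σ(HX,Y) = −σ(X,HY) for all X,Y), let δ ∈ ℝ, and suppose S is a real linear map on ℝ^{2d} which commutes with H², is symmetric with respect to σ (σ(SX,Y) = σ(X,SY) for all X,Y), and satisfies S²(I + δ²H²) = I. Extend all maps complex-linearly to ℂ^{2d} and set κ = (I + iδH)∘S. Then κ is complex symplectic: σ(κ(X), κ(Y)) = σ(X,Y) for all X, Y ∈ ℂ^{2d}. -/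
open Matrix

noncomputable section

lemma dot_ext {n R : Type*} [Fintype n] [DecidableEq n] [CommRing R] (A B : Matrix n n R)
    (h : ∀ X Y : n → R, X ⬝ᵥ A *ᵥ Y = X ⬝ᵥ B *ᵥ Y) : A = B := by
  ext i j
  have := h (Pi.single i 1) (Pi.single j 1)
  simpa using this

lemma dot_trans {n R : Type*} [Fintype n] [CommRing R] (A : Matrix n n R) (X Z : n → R) :
    (A *ᵥ X) ⬝ᵥ Z = X ⬝ᵥ (Aᵀ *ᵥ Z) := by
  rw [Matrix.mulVec_transpose, dotProduct_comm, Matrix.dotProduct_mulVec,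
    dotProduct_comm]

lemma Jmap (d : ℕ) : (Jmat d ℝ).map (fun r => (r : ℂ)) = Jmat d ℂ := by
  ext (i | i) (j | j) <;>
    simp [Jmat, Matrix.fromBlocks, Matrix.map_apply, Matrix.one_apply, apply_ite]

lemma myMapRealSmul {n : Type*} (r : ℝ) (M : Matrix n n ℝ) :
    ((r • M).map (fun x => (x : ℂ))) = (r : ℂ) • (M.map (fun x => (x : ℂ))) := by
  ext i j
  simp [Matrix.map_apply]

lemma myMapAdd {n : Type*} (M N : Matrix n n ℝ) :
    ((M + N).map (fun x => (x : ℂ))) = M.map (fun x => (x : ℂ)) + N.map (fun x => (x : ℂ)) := by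
  ext i j; simp [Matrix.map_apply]

lemma myMapNeg {n : Type*} (M : Matrix n n ℝ) :
    ((-M).map (fun x => (x : ℂ))) = -(M.map (fun x => (x : ℂ))) := by
  ext i j; simp [Matrix.map_apply]

lemma myMapOne {n : Type*} [Fintype n] [DecidableEq n] :
    ((1 : Matrix n n ℝ).map (fun x => (x : ℂ))) = 1 := by
  ext i j; simp [Matrix.map_apply, Matrix.one_apply, apply_ite]

lemma myMapMul {n : Type*} [Fintype n] (M N : Matrix n n ℝ) :
    ((M * N).map (fun x => (x : ℂ))) = M.map (fun x => (x : ℂ)) * N.map (fun x => (x : ℂ)) := by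
  ext i j; simp [Matrix.map_apply, Matrix.mul_apply]

/-- Let `H` be a real linear map on `ℝ^{2d}`, skew with respect to the
symplectic form `σ`, let `δ ∈ ℝ`, and let `S` be a real linear map commuting with `H²`,
symmetric with respect to `σ`, and satisfying `S²(I + δ² H²) = I`.  Then the
complex-linear extension `κ = (I + i δ H) ∘ S` is complex symplectic:
`σ(κ X, κ Y) = σ(X, Y)` for all `X, Y ∈ ℂ^{2d}`. -/
theorem statement6 (d : ℕ)
    (H S : Matrix (Fin d ⊕ Fin d) (Fin d ⊕ Fin d) ℝ) (δ : ℝ)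
    (hskew : ∀ X Y : Fin d ⊕ Fin d → ℝ,
      (H *ᵥ X) ⬝ᵥ (Jmat d ℝ) *ᵥ Y = -(X ⬝ᵥ (Jmat d ℝ) *ᵥ (H *ᵥ Y)))
    (hcomm : S * (H * H) = (H * H) * S)
    (hsymm : ∀ X Y : Fin d ⊕ Fin d → ℝ,
      (S *ᵥ X) ⬝ᵥ (Jmat d ℝ) *ᵥ Y = X ⬝ᵥ (Jmat d ℝ) *ᵥ (S *ᵥ Y))
    (hSsq : S * S * (1 + (δ ^ 2) • (H * H)) = 1) :
    ∀ X Y : Fin d ⊕ Fin d → ℂ,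
      ((((1 : Matrix (Fin d ⊕ Fin d) (Fin d ⊕ Fin d) ℂ) +
            (Complex.I * (δ : ℂ)) • (H.map (fun r => (r : ℂ)))) *
          (S.map (fun r => (r : ℂ)))) *ᵥ X) ⬝ᵥ
        (Jmat d ℂ) *ᵥ
        ((((1 : Matrix (Fin d ⊕ Fin d) (Fin d ⊕ Fin d) ℂ) +
            (Complex.I * (δ : ℂ)) • (H.map (fun r => (r : ℂ)))) *
          (S.map (fun r => (r : ℂ)))) *ᵥ Y) =
      X ⬝ᵥ (Jmat d ℂ) *ᵥ Y := by
  -- matrix-level form of the skew hypothesis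
  have hA : Hᵀ * Jmat d ℝ = -(Jmat d ℝ * H) := by
    apply dot_ext
    intro X Y
    rw [← Matrix.mulVec_mulVec, ← dot_trans, hskew, Matrix.neg_mulVec,
      dotProduct_neg, Matrix.mulVec_mulVec]
  have hB : Sᵀ * Jmat d ℝ = Jmat d ℝ * S := by
    apply dot_ext
    intro X Y
    rw [← Matrix.mulVec_mulVec, ← dot_trans, hsymm, Matrix.mulVec_mulVec]
  -- complexified matrices
  set A := H.map (fun r => (r : ℂ)) with hAdef
  set B := S.map (fun r => (r : ℂ)) with hBdef
  set K := Jmat d ℂ with hKdef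
  have hA' : Aᵀ * K = -(K * A) := by
    have := congrArg (fun M => M.map (fun r => (r : ℂ))) hA
    simpa [myMapMul, Matrix.transpose_map, Jmap, myMapNeg, hAdef, hKdef] using this
  have hB' : Bᵀ * K = K * B := by
    have := congrArg (fun M => M.map (fun r => (r : ℂ))) hB
    simpa [myMapMul, Matrix.transpose_map, Jmap, hBdef, hKdef] using this
  have hc' : B * (A * A) = (A * A) * B := by
    have := congrArg (fun M => M.map (fun r => (r : ℂ))) hcomm
    simpa [myMapMul, hAdef, hBdef] using this
  have hS' : B * B * (1 + (δ ^ 2 : ℂ) • (A * A)) = 1 := by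
    have := congrArg (fun M => M.map (fun r => (r : ℂ))) hSsq
    simpa [myMapMul, myMapAdd, myMapRealSmul, myMapOne, hAdef, hBdef,
      Complex.ofReal_pow] using this
  set c : ℂ := Complex.I * (δ : ℂ) with hc
  have hc2 : c * c = -(δ ^ 2 : ℂ) := by
    have h : c * c = Complex.I ^ 2 * (δ : ℂ) ^ 2 := by rw [hc]; ring
    rw [h, Complex.I_sq]; ring
  -- the middle identity
  have h1 : (1 + c • Aᵀ) * K * (1 + c • A) = K * (1 + (δ ^ 2 : ℂ) • (A * A)) := by
    have expand : (1 + c • Aᵀ) * K * (1 + c • A)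
        = K + c • (K * A) + c • (Aᵀ * K) + (c * c) • ((Aᵀ * K) * A) := by
      simp only [mul_add, add_mul, mul_one, one_mul, smul_mul_assoc, mul_smul_comm, smul_smul,
        smul_add]
      abel
    rw [expand, hA', hc2]
    simp only [smul_neg, neg_mul, neg_smul, neg_neg, Matrix.mul_assoc, mul_add, mul_one,
      mul_smul_comm]
    abel
  have hcomm2 : (1 + (δ ^ 2 : ℂ) • (A * A)) * B = B * (1 + (δ ^ 2 : ℂ) • (A * A)) := by
    simp only [add_mul, mul_add, one_mul, mul_one, smul_mul_assoc, mul_smul_comm, hc']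
  -- the key symplectic identity for κ
  have key : ((1 + c • A) * B)ᵀ * K * ((1 + c • A) * B) = K := by
    have ht : ((1 + c • A) * B)ᵀ = Bᵀ * (1 + c • Aᵀ) := by
      simp [Matrix.transpose_mul, Matrix.transpose_add, Matrix.transpose_smul]
    rw [ht]
    calc Bᵀ * (1 + c • Aᵀ) * K * ((1 + c • A) * B)
        = Bᵀ * ((1 + c • Aᵀ) * K * (1 + c • A)) * B := by
          simp only [Matrix.mul_assoc]
      _ = Bᵀ * (K * (1 + (δ ^ 2 : ℂ) • (A * A))) * B := by rw [h1]
      _ = (Bᵀ * K) * ((1 + (δ ^ 2 : ℂ) • (A * A)) * B) := by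
          simp only [Matrix.mul_assoc]
      _ = K * (B * (B * (1 + (δ ^ 2 : ℂ) • (A * A)))) := by
          rw [hB', hcomm2, Matrix.mul_assoc]
      _ = K := by rw [← Matrix.mul_assoc B B, hS', mul_one]
  intro X Y
  rw [dot_trans, Matrix.mulVec_mulVec, Matrix.mulVec_mulVec, key]
end
end

section
/- Let A, B, C be complex d×d matrices with A and C symmetric, B invertible and Im C positive definite, and let Φ(x) = −½·Im⟨x,Ax⟩ + ½⟨Im(Bᵗx), (Im C)^{-1}·Im(Bᵗx)⟩ for x ∈ ℂ^d. Writing x = u + iv with u, v ∈ ℝ^d, the d×d matrix of mixed second derivatives with entries ¼(∂_{u_i}∂_{u_j} + ∂_{v_i}∂_{v_j})Φ is constant and equals ¼(Im B·(Im C)^{-1}·(Im B)ᵗ + Re B·(Im C)^{-1}·(Re B)ᵗ), and this matrix is positive definite; that is, Φ is uniformly strictly plurisubharmonic. -/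
/-!
`Φ(x) = F(x, x)` for a real bilinear form `F` on `ℂ^d`, so each mixed second derivative
`∂_s ∂_t Φ(x + s w + t u)` is the constant `F(w, u) + F(u, w)`. Adding the real directions
`e_j, e_k` to the imaginary ones `i e_j, i e_k`, the `A`-terms cancel since
`⟨i e_j, A (i e_k)⟩ = -⟨e_j, A e_k⟩`, and the `Im(Bᵀx)`-term contributes `Im B (Im C)⁻¹ (Im B)ᵀ`
and `Re B (Im C)⁻¹ (Re B)ᵀ` respectively. With `N = (Im C)⁻¹ > 0`, `X N Xᵀ + Y N Yᵀ` is positive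
definite as soon as `Xᵀ y = Yᵀ y = 0` forces `y = 0`; for `X = Im B`, `Y = Re B` and real `y`
this says `Bᵀ y = 0`, so `y = 0` because `B` is invertible.
-/

open Matrix

noncomputable section

/-- The weight `Φ(x) = -½ Im⟨x,Ax⟩ + ½⟨Im(Bᵀx), (Im C)⁻¹ Im(Bᵀx)⟩` on `ℂ^d`. -/
def Phi9 {d : ℕ} (A B C : Matrix (Fin d) (Fin d) ℂ) (x : Fin d → ℂ) : ℝ :=
  -(1 / 2) * (x ⬝ᵥ A *ᵥ x).im +
    (1 / 2) * ((fun j => ((Bᵀ *ᵥ x) j).im) ⬝ᵥ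
      (C.map Complex.im)⁻¹ *ᵥ fun j => ((Bᵀ *ᵥ x) j).im)

/-- The matrix `¼ (Im B (Im C)⁻¹ (Im B)ᵀ + Re B (Im C)⁻¹ (Re B)ᵀ)`. -/
def Levi9 {d : ℕ} (B C : Matrix (Fin d) (Fin d) ℂ) : Matrix (Fin d) (Fin d) ℝ :=
  (1 / 4 : ℝ) • (B.map Complex.im * (C.map Complex.im)⁻¹ * (B.map Complex.im)ᵀ +
    B.map Complex.re * (C.map Complex.im)⁻¹ * (B.map Complex.re)ᵀ)

theorem hasDerivAt_quadratic_zero (a b c : ℝ) :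
    HasDerivAt (fun t : ℝ => a + t * b + t ^ 2 * c) b 0 := by
  simpa using (((hasDerivAt_id (0 : ℝ)).mul_const b).const_add a).fun_add
    ((hasDerivAt_pow 2 (0 : ℝ)).mul_const c)

section BilinearDeriv

variable {E : Type*} [AddCommGroup E] [Module ℝ E] (f : E →ₗ[ℝ] E →ₗ[ℝ] ℝ)

theorem deriv_apply_self_add_smul (y u : E) :
    deriv (fun t : ℝ => f (y + t • u) (y + t • u)) 0 = f y u + f u y := by
  have h : (fun t : ℝ => f (y + t • u) (y + t • u)) =
      fun t => f y y + t * (f y u + f u y) + t ^ 2 * f u u := by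
    funext t
    simp only [map_add, map_smul, LinearMap.add_apply, LinearMap.smul_apply, smul_eq_mul]
    ring
  rw [h, (hasDerivAt_quadratic_zero _ _ _).deriv]

theorem deriv_deriv_apply_self_add_smul (x w u : E) :
    deriv (fun s : ℝ => deriv (fun t : ℝ => f (x + s • w + t • u) (x + s • w + t • u)) 0) 0 =
      f w u + f u w := by
  simp only [deriv_apply_self_add_smul]
  have h : (fun s : ℝ => f (x + s • w) u + f u (x + s • w)) =
      fun s => (f x u + f u x) + s * (f w u + f u w) + s ^ 2 * 0 := by
    funext s
    simp only [map_add, map_smul, LinearMap.add_apply, LinearMap.smul_apply, smul_eq_mul]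
    ring
  rw [h, (hasDerivAt_quadratic_zero _ _ _).deriv]

end BilinearDeriv

namespace Matrix

theorem single_dotProduct_mulVec_single {n R : Type*} [Fintype n] [DecidableEq n]
    [CommSemiring R] (M : Matrix n n R) (j k : n) (a b : R) :
    Pi.single j a ⬝ᵥ M *ᵥ Pi.single k b = a * M j k * b := by
  simp only [mulVec_single, op_smul_eq_smul, dotProduct_smul, single_dotProduct, col_apply,
    smul_eq_mul]
  ring

theorem mul_mul_transpose_apply {n R : Type*} [Fintype n] [CommSemiring R]
    (X N : Matrix n n R) (j k : n) : (X * N * Xᵀ) j k = X j ⬝ᵥ N *ᵥ X k := by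
  rw [mul_mul_apply, transpose_transpose]

theorem PosDef.mul_mul_transpose_add {m n : Type*} [Fintype m] [Fintype n]
    {N : Matrix m m ℝ} (hN : N.PosDef) {X Y : Matrix n m ℝ}
    (hXY : ∀ y, y ᵥ* X = 0 → y ᵥ* Y = 0 → y = 0) :
    (X * N * Xᵀ + Y * N * Yᵀ).PosDef := by
  have hform : ∀ (Z : Matrix n m ℝ) (y : n → ℝ),
      star y ⬝ᵥ (Z * N * Zᵀ) *ᵥ y = star (y ᵥ* Z) ⬝ᵥ N *ᵥ (y ᵥ* Z) := by
    intro Z y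
    rw [star_trivial, star_trivial, ← mulVec_mulVec, ← mulVec_mulVec, dotProduct_mulVec,
      mulVec_transpose]
  have hpsd : ∀ Z : Matrix n m ℝ, (Z * N * Zᵀ).PosSemidef := fun Z => by
    simpa using hN.posSemidef.mul_mul_conjTranspose_same Z
  refine .of_dotProduct_mulVec_pos ((hpsd X).add (hpsd Y)).isHermitian fun y hy => ?_
  rw [add_mulVec, dotProduct_add, hform, hform]
  have hnonneg := hN.posSemidef.dotProduct_mulVec_nonneg
  by_cases hX : y ᵥ* X = 0
  · exact add_pos_of_nonneg_of_pos (hnonneg _)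
      (hN.dotProduct_mulVec_pos fun hY => hy (hXY y hX hY))
  · exact add_pos_of_pos_of_nonneg (hN.dotProduct_mulVec_pos hX) (hnonneg _)

open Complex

theorem eq_zero_of_vecMul_map_im_of_vecMul_map_re {n : Type*} [Fintype n] [DecidableEq n]
    {B : Matrix n n ℂ} (hB : IsUnit B.det) {y : n → ℝ}
    (him : y ᵥ* B.map im = 0) (hre : y ᵥ* B.map re = 0) : y = 0 := by
  have hc : (fun i => (y i : ℂ)) ᵥ* B = 0 := by
    ext i
    apply Complex.ext
    · simpa [vecMul, dotProduct, re_sum] using congrFun hre i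
    · simpa [vecMul, dotProduct, im_sum] using congrFun him i
  have h0 := vecMul_injective_of_isUnit ((isUnit_iff_isUnit_det B).mpr hB)
    (hc.trans (zero_vecMul B).symm)
  ext i
  simpa using congrFun h0 i

def imMulVecLin {m n : Type*} [Fintype n] (B : Matrix m n ℂ) : (n → ℂ) →ₗ[ℝ] (m → ℝ) where
  toFun x j := ((B *ᵥ x) j).im
  map_add' x y := by ext j; simp [mulVec_add]
  map_smul' r x := by ext j; simp [mulVec_smul]

variable {m n : Type*} [Fintype n] [DecidableEq n] (B : Matrix n m ℂ) (j : n)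

theorem imMulVecLin_transpose_single_one : imMulVecLin Bᵀ (Pi.single j 1) = B.map im j := by
  ext i; simp [imMulVecLin, mulVec_single]

theorem imMulVecLin_transpose_single_I : imMulVecLin Bᵀ (Pi.single j I) = B.map re j := by
  ext i; simp [imMulVecLin, mulVec_single]

end Matrix

theorem posDef_levi9 {d : ℕ} {B C : Matrix (Fin d) (Fin d) ℂ} (hB : IsUnit B.det)
    (hCim : (C.map Complex.im).PosDef) : (Levi9 B C).PosDef :=
  (hCim.inv.mul_mul_transpose_add fun _ him hre =>
    eq_zero_of_vecMul_map_im_of_vecMul_map_re hB him hre).smul (by norm_num)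

namespace Phi9

open Complex

variable {d : ℕ} (A B C : Matrix (Fin d) (Fin d) ℂ)

def polarForm : (Fin d → ℂ) →ₗ[ℝ] (Fin d → ℂ) →ₗ[ℝ] ℝ :=
  LinearMap.mk₂ ℝ (fun x y => -(1 / 2) * (x ⬝ᵥ A *ᵥ y).im +
      (1 / 2) * (imMulVecLin Bᵀ x ⬝ᵥ (C.map im)⁻¹ *ᵥ imMulVecLin Bᵀ y))
    (fun x y z => by simp only [add_dotProduct, add_im, map_add]; ring)
    (fun r x y => by
      simp only [smul_dotProduct, real_smul, im_ofReal_mul, map_smul, smul_eq_mul]; ring)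
    (fun x y z => by simp only [mulVec_add, dotProduct_add, add_im, map_add]; ring)
    (fun r x y => by
      simp only [mulVec_smul, dotProduct_smul, real_smul, im_ofReal_mul, map_smul, smul_eq_mul]
      ring)

theorem polarForm_apply_self (x : Fin d → ℂ) : polarForm A B C x x = Phi9 A B C x := rfl

theorem deriv_deriv (x w u : Fin d → ℂ) :
    deriv (fun s : ℝ => deriv (fun t : ℝ => Phi9 A B C (x + (s : ℂ) • w + (t : ℂ) • u)) 0) 0 =
      polarForm A B C w u + polarForm A B C u w := by
  simp only [coe_smul, ← polarForm_apply_self]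
  exact deriv_deriv_apply_self_add_smul _ x w u

theorem polarForm_single_add_single_I (j k : Fin d) :
    polarForm A B C (Pi.single j 1) (Pi.single k 1) +
        polarForm A B C (Pi.single j I) (Pi.single k I) = 2 * Levi9 B C j k := by
  have hI : I * A j k * I = -A j k := by rw [mul_comm I, mul_assoc, I_mul_I, mul_neg_one]
  simp only [polarForm, LinearMap.mk₂_apply, imMulVecLin_transpose_single_one,
    imMulVecLin_transpose_single_I, single_dotProduct_mulVec_single, hI, one_mul, mul_one,
    neg_im, Levi9, Matrix.smul_apply, Matrix.add_apply, smul_eq_mul, mul_mul_transpose_apply]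
  ring

end Phi9

theorem statement9_general (d : ℕ)
    (A B C : Matrix (Fin d) (Fin d) ℂ)
    (hB : IsUnit B.det)
    (hCim : (C.map Complex.im).PosDef) :
    (∀ (x : Fin d → ℂ) (j k : Fin d),
      (1 / 4) *
        ((deriv (fun s : ℝ => deriv (fun t : ℝ =>
            Phi9 A B C (x + (s : ℂ) • (Pi.single j (1 : ℂ) : Fin d → ℂ) +
              (t : ℂ) • (Pi.single k (1 : ℂ) : Fin d → ℂ))) 0) 0) +
         (deriv (fun s : ℝ => deriv (fun t : ℝ =>
            Phi9 A B C (x + (s : ℂ) • (Pi.single j Complex.I : Fin d → ℂ) +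
              (t : ℂ) • (Pi.single k Complex.I : Fin d → ℂ))) 0) 0)) =
      Levi9 B C j k) ∧
    (Levi9 B C).PosDef := by
  have hLevi := posDef_levi9 hB hCim
  refine ⟨fun x j k => ?_, hLevi⟩
  rw [Phi9.deriv_deriv, Phi9.deriv_deriv]
  have hsymm : Levi9 B C k j = Levi9 B C j k := hLevi.isHermitian.apply j k
  linarith [Phi9.polarForm_single_add_single_I A B C j k,
    Phi9.polarForm_single_add_single_I A B C k j]

/-- For `A`, `C` symmetric, `B` invertible and `Im C` positive definite,
writing `x = u + iv`, the matrix of mixed second derivatives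
`¼(∂_{u_j}∂_{u_k} + ∂_{v_j}∂_{v_k})Φ` of the weight `Φ` is constant, equal to
`¼ (Im B (Im C)⁻¹ (Im B)ᵀ + Re B (Im C)⁻¹ (Re B)ᵀ)`, and positive definite; i.e. `Φ` is
uniformly strictly plurisubharmonic. -/
theorem statement9 (d : ℕ)
    (A B C : Matrix (Fin d) (Fin d) ℂ)
    (hA : A.IsSymm) (hC : C.IsSymm)
    (hB : IsUnit B.det)
    (hCim : (C.map Complex.im).PosDef) :
    (∀ (x : Fin d → ℂ) (j k : Fin d),
      (1 / 4) *
        ((deriv (fun s : ℝ => deriv (fun t : ℝ =>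
            Phi9 A B C (x + (s : ℂ) • (Pi.single j (1 : ℂ) : Fin d → ℂ) +
              (t : ℂ) • (Pi.single k (1 : ℂ) : Fin d → ℂ))) 0) 0) +
         (deriv (fun s : ℝ => deriv (fun t : ℝ =>
            Phi9 A B C (x + (s : ℂ) • (Pi.single j Complex.I : Fin d → ℂ) +
              (t : ℂ) • (Pi.single k Complex.I : Fin d → ℂ))) 0) 0)) =
      Levi9 B C j k) ∧
    (Levi9 B C).PosDef :=
  statement9_general d A B C hB hCim
end
end

section
/- Let κ = [[A, B],[C, D]] : ℂ^{2d} → ℂ^{2d} be a complex-linear map given by d×d blocks, with B invertible. Then κ is canonical (symplectic), i.e. κᵗJκ = J, if and only if the following three conditions hold: (i) (DB^{-1})ᵗ = DB^{-1}; (ii) (B^{-1}A)ᵗ = B^{-1}A; (iii) −(B^{-1})ᵗ = C − DB^{-1}A. -/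
open Matrix

noncomputable section

/-- A block complex-linear map `κ = [[A,B],[C,D]]` on `ℂ^{2d}` with `B`
invertible is canonical (symplectic), i.e. `κᵀ J κ = J`, if and only if
`(DB⁻¹)ᵀ = DB⁻¹`, `(B⁻¹A)ᵀ = B⁻¹A`, and `-(B⁻¹)ᵀ = C - DB⁻¹A`. -/
theorem statement10 (d : ℕ)
    (A B C D : Matrix (Fin d) (Fin d) ℂ)
    (hB : IsUnit B.det) :
    ((Matrix.fromBlocks A B C D)ᵀ * (Jmat d ℂ) * Matrix.fromBlocks A B C D = Jmat d ℂ)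
      ↔ ((D * B⁻¹)ᵀ = D * B⁻¹ ∧ (B⁻¹ * A)ᵀ = B⁻¹ * A ∧
          -(B⁻¹)ᵀ = C - D * B⁻¹ * A) := by
  have hB1 : B * B⁻¹ = 1 := Matrix.mul_nonsing_inv B hB
  have hB2 : B⁻¹ * B = 1 := Matrix.nonsing_inv_mul B hB
  have hBt1 : Bᵀ * (B⁻¹)ᵀ = 1 := by rw [← transpose_mul, hB2, transpose_one]
  have hBt2 : (B⁻¹)ᵀ * Bᵀ = 1 := by rw [← transpose_mul, hB1, transpose_one]
  rw [Jmat, fromBlocks_transpose, fromBlocks_multiply, fromBlocks_multiply, fromBlocks_inj]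
  simp only [Matrix.mul_zero, Matrix.zero_mul, Matrix.mul_one, Matrix.one_mul,
    mul_neg_one, neg_mul, add_zero, zero_add]
  constructor
  · rintro ⟨h1, _h2, h3, h4⟩
    -- h4 gives the first condition
    have h4' : Dᵀ * B = Bᵀ * D := by
      rw [← sub_eq_add_neg, sub_eq_zero] at h4; exact h4
    have hP1 : (D * B⁻¹)ᵀ = D * B⁻¹ := by
      rw [transpose_mul]
      calc (B⁻¹)ᵀ * Dᵀ = (B⁻¹)ᵀ * Dᵀ * (B * B⁻¹) := by rw [hB1, mul_one]
        _ = (B⁻¹)ᵀ * (Dᵀ * B) * B⁻¹ := by simp only [mul_assoc]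
        _ = ((B⁻¹)ᵀ * Bᵀ) * (D * B⁻¹) := by rw [h4']; simp only [mul_assoc]
        _ = D * B⁻¹ := by rw [hBt2, one_mul]
    have hP1' : (B⁻¹)ᵀ * Dᵀ = D * B⁻¹ := by rwa [transpose_mul] at hP1
    -- h3 gives the third condition
    have hBC : Bᵀ * C = Dᵀ * A - 1 := by rw [← h3]; abel
    have hC3 : C = D * B⁻¹ * A - (B⁻¹)ᵀ := by
      calc C = ((B⁻¹)ᵀ * Bᵀ) * C := by rw [hBt2, one_mul]
        _ = (B⁻¹)ᵀ * (Dᵀ * A - 1) := by rw [mul_assoc, hBC]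
        _ = ((B⁻¹)ᵀ * Dᵀ) * A - (B⁻¹)ᵀ := by rw [mul_sub, mul_one, mul_assoc]
        _ = D * B⁻¹ * A - (B⁻¹)ᵀ := by rw [hP1']
    have hP3 : -(B⁻¹)ᵀ = C - D * B⁻¹ * A := by rw [hC3]; abel
    -- h1 gives the second condition
    have hCt : Cᵀ = Aᵀ * (D * B⁻¹) - B⁻¹ := by
      rw [hC3, transpose_sub, transpose_mul, transpose_transpose, hP1]
    have h1' : Cᵀ * A = Aᵀ * C := by
      rw [← sub_eq_add_neg, sub_eq_zero] at h1; exact h1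
    have hP2 : (B⁻¹ * A)ᵀ = B⁻¹ * A := by
      rw [hCt, hC3, sub_mul, mul_sub] at h1'
      simp only [mul_assoc] at h1'
      have := sub_right_injective h1'
      rw [transpose_mul]
      exact this.symm
    exact ⟨hP1, hP2, hP3⟩
  · rintro ⟨hP1, hP2, hP3⟩
    have hP1' : (B⁻¹)ᵀ * Dᵀ = D * B⁻¹ := by rwa [transpose_mul] at hP1
    have hP2' : Aᵀ * (B⁻¹)ᵀ = B⁻¹ * A := by rwa [transpose_mul] at hP2
    have hC3 : C = D * B⁻¹ * A - (B⁻¹)ᵀ := by rw [sub_eq_add_neg, hP3]; abel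
    have key1 : Dᵀ * B = Bᵀ * D := by
      calc Dᵀ * B = Bᵀ * ((B⁻¹)ᵀ * Dᵀ) * B := by rw [← mul_assoc, hBt1, one_mul]
        _ = Bᵀ * (D * B⁻¹) * B := by rw [hP1']
        _ = Bᵀ * D := by simp only [mul_assoc]; rw [hB2, mul_one]
    have hBC : Bᵀ * C = Dᵀ * A - 1 := by
      rw [hC3, mul_sub, hBt1]
      congr 1
      simp only [← mul_assoc]
      rw [← key1, mul_assoc Dᵀ B B⁻¹, hB1, mul_one]
    have hCB : Cᵀ * B = Aᵀ * D - 1 := by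
      have h := congrArg Matrix.transpose hBC
      simpa [transpose_mul, transpose_sub] using h
    have hCt : Cᵀ = Aᵀ * (D * B⁻¹) - B⁻¹ := by
      rw [hC3, transpose_sub, transpose_mul, transpose_transpose, hP1]
    have h1' : Cᵀ * A = Aᵀ * C := by
      rw [hCt, hC3, sub_mul, mul_sub, hP2']
      simp only [mul_assoc]
    refine ⟨by rw [h1']; abel, by rw [hCB]; abel, by rw [hBC]; abel, by rw [key1]; abel⟩
end
end

section
/- Let d ≥ 1, let a₁, …, a_d > 0 be real numbers, and let r > 0. Then there exist constants C > 0 and f₀ > 0 such that for every real f ≥ f₀ and every ρ ∈ ℝ with |ρ| ≤ 3f, the number of multi-indices k = (k₁,…,k_d) ∈ (ℕ∪{0})^d satisfying |ρ − Σ_{j=1}^d (1+2k_j)a_j| ≤ r is at most C·f^{d−1}. -/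
/-- Lattice point counting in strips: for positive reals `a₁, …, a_d`
and `r > 0` there are `C > 0` and `f₀ > 0` such that for all `f ≥ f₀` and all `ρ` with
`|ρ| ≤ 3f`, the number of multi-indices `k ∈ ℕ^d` with `|ρ - Σ (1 + 2 k_j) a_j| ≤ r` is
at most `C f^{d-1}`. -/
theorem statement12 (d : ℕ) (hd : 1 ≤ d)
    (a : Fin d → ℝ) (ha : ∀ j, 0 < a j)
    (r : ℝ) (hr : 0 < r) :
    ∃ C : ℝ, 0 < C ∧ ∃ f₀ : ℝ, 0 < f₀ ∧
      ∀ f : ℝ, f₀ ≤ f → ∀ ρ : ℝ, |ρ| ≤ 3 * f →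
        (Set.ncard {k : Fin d → ℕ |
            |ρ - ∑ j, (1 + 2 * (k j : ℝ)) * a j| ≤ r} : ℝ) ≤ C * f ^ (d - 1) := by
  obtain ⟨n, rfl⟩ : ∃ n, d = n + 1 := ⟨d - 1, (Nat.succ_pred_eq_of_pos hd).symm⟩
  set m : ℕ := ⌈r / a 0⌉₊ with hm
  set c : Fin (n + 1) → ℝ := fun j => (3 + r) / (2 * a j) + 1 with hc
  have hcpos : ∀ j, 0 < c j := fun j => by
    have := ha j; rw [hc]; positivity
  have hprodc : 0 < ∏ j : Fin n, c j.succ := Finset.prod_pos fun j _ => hcpos j.succ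
  refine ⟨(m + 1) * ∏ j : Fin n, c j.succ, by positivity, 1, one_pos, ?_⟩
  intro f hf ρ hρ
  have hf0 : (0:ℝ) < f := lt_of_lt_of_le one_pos hf
  set N : Fin (n + 1) → ℕ := fun j => ⌊(3 * f + r) / (2 * a j)⌋₊ with hN
  set cond : (Fin (n + 1) → ℕ) → Prop :=
    fun k => |ρ - ∑ j, (1 + 2 * (k j : ℝ)) * a j| ≤ r with hcond
  have hdec : DecidablePred cond := fun k => by rw [hcond]; infer_instance
  set T : Finset (Fin (n + 1) → ℕ) :=
    (Fintype.piFinset fun j => Finset.range (N j + 1)).filter cond with hT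
  -- the set equals the finset T
  have hset : {k : Fin (n + 1) → ℕ |
      |ρ - ∑ j, (1 + 2 * (k j : ℝ)) * a j| ≤ r} = ↑T := by
    ext k
    simp only [hT, Set.mem_setOf_eq, Finset.coe_filter, Fintype.mem_piFinset,
      Finset.mem_range, Set.mem_setOf_eq, hcond]
    constructor
    · intro hk
      refine ⟨fun j => ?_, hk⟩
      have hsum : ∑ j, (1 + 2 * (k j : ℝ)) * a j ≤ ρ + r := by
        have := abs_le.mp hk; linarith [this.1]
      have hterm : (1 + 2 * (k j : ℝ)) * a j ≤ 3 * f + r := by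
        have h1 : (1 + 2 * (k j : ℝ)) * a j ≤ ∑ i, (1 + 2 * (k i : ℝ)) * a i := by
          apply Finset.single_le_sum (f := fun i => (1 + 2 * (k i : ℝ)) * a i)
          · intro i _
            have := ha i
            positivity
          · exact Finset.mem_univ j
        have h2 : ρ ≤ 3 * f := le_trans (le_abs_self ρ) hρ
        linarith
      have hkj : (k j : ℝ) ≤ (3 * f + r) / (2 * a j) := by
        rw [le_div_iff₀ (by have := ha j; positivity)]
        nlinarith [ha j]
      have h3 : k j ≤ N j := Nat.le_floor hkj
      omega
    · exact fun h => h.2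
  rw [hset, Set.ncard_coe_finset]
  classical
  -- tail map
  set tl : (Fin (n + 1) → ℕ) → (Fin n → ℕ) := fun k => k ∘ Fin.succ with htl
  -- fiber bound
  have hfiber : ∀ t ∈ T.image tl, (T.filter fun k => tl k = t).card ≤ m + 1 := by
    intro t ht
    set x : ℝ := ρ - ∑ j : Fin n, (1 + 2 * (t j : ℝ)) * a j.succ with hx
    set B : ℝ := ((x + r) / a 0 - 1) / 2 with hB
    have key : ∀ k ∈ T.filter fun k => tl k = t,
        (k 0 : ℝ) ≤ B ∧ B - r / a 0 ≤ (k 0 : ℝ) := by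
      intro k hk
      rw [Finset.mem_filter] at hk
      obtain ⟨hkT, hkt⟩ := hk
      rw [hT, Finset.mem_filter] at hkT
      have hkc := hkT.2
      rw [hcond] at hkc
      have hsplit : ∑ j, (1 + 2 * (k j : ℝ)) * a j
          = (1 + 2 * (k 0 : ℝ)) * a 0 + ∑ j : Fin n, (1 + 2 * (t j : ℝ)) * a j.succ := by
        rw [Fin.sum_univ_succ]
        congr 1
        refine Finset.sum_congr rfl fun j _ => ?_
        rw [← hkt]; rfl
      rw [hsplit] at hkc
      have habs := abs_le.mp hkc
      have ha0 := ha 0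
      constructor
      · rw [hB]
        have : (1 + 2 * (k 0 : ℝ)) * a 0 ≤ x + r := by rw [hx]; linarith [habs.1]
        have h2 : 1 + 2 * (k 0 : ℝ) ≤ (x + r) / a 0 := by
          rw [le_div_iff₀ ha0]; linarith
        linarith
      · rw [hB]
        have : x - r ≤ (1 + 2 * (k 0 : ℝ)) * a 0 := by rw [hx]; linarith [habs.2]
        have h2 : (x - r) / a 0 ≤ 1 + 2 * (k 0 : ℝ) := by
          rw [div_le_iff₀ ha0]; linarith
        have h3 : (x + r) / a 0 - 2 * (r / a 0) = (x - r) / a 0 := by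
          field_simp; ring
        linarith
    have hmaps : ∀ k ∈ T.filter fun k => tl k = t,
        k 0 ∈ Finset.Icc (⌊B⌋₊ - m) ⌊B⌋₊ := by
      intro k hk
      obtain ⟨h1, h2⟩ := key k hk
      have hub : k 0 ≤ ⌊B⌋₊ := Nat.le_floor h1
      have hB0 : (0:ℝ) ≤ B := le_trans (by positivity) h1
      have hfl : (⌊B⌋₊ : ℝ) ≤ B := Nat.floor_le hB0
      have hra : r / a 0 ≤ (m : ℝ) := Nat.le_ceil _
      have hlb' : (⌊B⌋₊ : ℝ) ≤ (k 0 : ℝ) + m := by linarith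
      have hlb : ⌊B⌋₊ ≤ k 0 + m := by exact_mod_cast hlb'
      rw [Finset.mem_Icc]; omega
    have hinj : Set.InjOn (fun k : Fin (n+1) → ℕ => k 0)
        ↑(T.filter fun k => tl k = t) := by
      intro k hk k' hk' hkk
      rw [Finset.mem_coe, Finset.mem_filter] at hk hk'
      funext j
      refine Fin.cases ?_ (fun i => ?_) j
      · exact hkk
      · have := congrFun (hk.2.trans hk'.2.symm) i
        exact this
    have := Finset.card_le_card_of_injOn _ hmaps hinj
    refine le_trans this ?_
    rw [Nat.card_Icc]; omega
  have hcard : T.card ≤ (m + 1) * (T.image tl).card :=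
    Finset.card_le_mul_card_image T (m + 1) hfiber
  have himg : (T.image tl).card ≤ ∏ j : Fin n, (N j.succ + 1) := by
    have hsub : T.image tl ⊆ Fintype.piFinset fun j : Fin n => Finset.range (N j.succ + 1) := by
      intro t ht
      rw [Finset.mem_image] at ht
      obtain ⟨k, hk, rfl⟩ := ht
      rw [hT, Finset.mem_filter, Fintype.mem_piFinset] at hk
      rw [Fintype.mem_piFinset]
      intro j
      exact hk.1 j.succ
    calc (T.image tl).card ≤ _ := Finset.card_le_card hsub
      _ = ∏ j : Fin n, (N j.succ + 1) := by
          rw [Fintype.card_piFinset]; simp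
  -- now the real-number estimate
  have hNle : ∀ j : Fin (n + 1), ((N j : ℝ) + 1) ≤ c j * f := by
    intro j
    have haj := ha j
    have hfl : (N j : ℝ) ≤ (3 * f + r) / (2 * a j) := Nat.floor_le (by positivity)
    have h1 : (3 * f + r) / (2 * a j) ≤ ((3 + r) * f) / (2 * a j) := by
      gcongr
      nlinarith
    rw [hc]
    have h1f : (1:ℝ) ≤ f := hf
    have heq : ((3 + r) / (2 * a j) + 1) * f = (3 + r) * f / (2 * a j) + f := by
      field_simp
    rw [heq]
    linarith
  have hprod : (∏ j : Fin n, ((N j.succ : ℝ) + 1)) ≤ (∏ j : Fin n, c j.succ) * f ^ n := by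
    calc (∏ j : Fin n, ((N j.succ : ℝ) + 1)) ≤ ∏ j : Fin n, c j.succ * f := by
          apply Finset.prod_le_prod
          · intro j _; positivity
          · intro j _; exact hNle j.succ
      _ = (∏ j : Fin n, c j.succ) * f ^ n := by
          rw [Finset.prod_mul_distrib, Finset.prod_const, Finset.card_univ, Fintype.card_fin]
  have hTR : (T.card : ℝ) ≤ ((m:ℝ) + 1) * ∏ j : Fin n, ((N j.succ : ℝ) + 1) := by
    have h1 : (T.card : ℝ) ≤ ((m + 1) * ((T.image tl).card) : ℕ) := by
      exact_mod_cast hcard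
    have h2 : ((T.image tl).card : ℝ) ≤ ∏ j : Fin n, ((N j.succ : ℝ) + 1) := by
      have := himg
      calc ((T.image tl).card : ℝ) ≤ ((∏ j : Fin n, (N j.succ + 1) : ℕ) : ℝ) := by
            exact_mod_cast this
        _ = ∏ j : Fin n, ((N j.succ : ℝ) + 1) := by push_cast; ring
    calc (T.card : ℝ) ≤ ((m:ℝ) + 1) * ((T.image tl).card : ℝ) := by push_cast at h1 ⊢; linarith
      _ ≤ ((m:ℝ) + 1) * ∏ j : Fin n, ((N j.succ : ℝ) + 1) := by
          apply mul_le_mul_of_nonneg_left h2 (by positivity)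
  have : (T.card : ℝ) ≤ ((m:ℝ) + 1) * ((∏ j : Fin n, c j.succ) * f ^ n) :=
    le_trans hTR (mul_le_mul_of_nonneg_left hprod (by positivity))
  calc (T.card : ℝ) ≤ ((m:ℝ) + 1) * ((∏ j : Fin n, c j.succ) * f ^ n) := this
    _ = ((m:ℝ) + 1) * (∏ j : Fin n, c j.succ) * f ^ (n + 1 - 1) := by
        rw [Nat.add_sub_cancel]; ring
end

section
/- There exists an absolute constant C₀ > 1 with the following property. Let f ≥ 2 be real, N a natural number, w ∈ ℂ, and ζ₁, …, ζ_m ∈ ℂ a finite list such that for every integer n ≥ 0 the number of indices j with n ≤ |Re(w − ζ_j)| < n+1 is at most N. Then ∏_{j : |w−ζ_j| ≥ 1} (f / |w − ζ_j|) ≤ C₀^{N·f}. -/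
/-!
The factor `f / |w - ζ|` of an index in the strip `n ≤ |Re(w - ζ)| < n + 1` is at most
`max 1 (f / max 1 n)`. Strips with `n > f` therefore contribute nothing, and since each strip
holds at most `N` indices the product is at most `(∏_{n ≤ ⌊f⌋} f / max 1 n) ^ N`
`= (f · f^⌊f⌋ / ⌊f⌋!) ^ N ≤ (e^f · e^f) ^ N = (e²) ^ (N f)`.
-/

open Finset Nat

lemma Finset.prod_comp_le_prod_image_pow {ι κ R : Type*} [DecidableEq κ] [CommSemiring R]
    [PartialOrder R] [IsOrderedRing R] {s : Finset ι} {g : ι → κ} {B : κ → R} {N : ℕ}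
    (hB : ∀ k, 1 ≤ B k) (hfiber : ∀ k, #{i ∈ s | g i = k} ≤ N) :
    ∏ i ∈ s, B (g i) ≤ (∏ k ∈ s.image g, B k) ^ N := by
  rw [prod_comp, ← prod_pow]
  exact prod_le_prod (fun k _ => pow_nonneg (zero_le_one.trans (hB k)) _)
    fun k _ => pow_le_pow_right₀ (hB k) (hfiber k)

noncomputable def stripBound (f : ℝ) (n : ℕ) : ℝ := max 1 (f / max 1 (n : ℝ))

lemma one_le_stripBound (f : ℝ) (n : ℕ) : 1 ≤ stripBound f n := le_max_left _ _

lemma stripBound_eq_one {f : ℝ} {n : ℕ} (h : f < n) : stripBound f n = 1 :=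
  max_eq_left <| (div_le_one (by positivity)).2 (h.le.trans (le_max_right _ _))

lemma stripBound_eq_div {f : ℝ} {n : ℕ} (hf : 1 ≤ f) (hn : n ≤ f) :
    stripBound f n = f / max 1 (n : ℝ) :=
  max_eq_right <| (one_le_div (by positivity)).2 (max_le hf hn)

lemma div_norm_le_stripBound {f : ℝ} (hf : 0 ≤ f) {z : ℂ} (hz : 1 ≤ ‖z‖) :
    f / ‖z‖ ≤ stripBound f ⌊|z.re|⌋₊ :=
  le_max_of_le_right <| div_le_div_of_nonneg_left hf (by positivity) <|
    max_le hz ((Nat.floor_le (abs_nonneg _)).trans (Complex.abs_re_le_norm z))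

lemma prod_range_stripBound {f : ℝ} (hf : 1 ≤ f) :
    ∏ n ∈ range (⌊f⌋₊ + 1), stripBound f n = f ^ ⌊f⌋₊ / ⌊f⌋₊ ! * f := by
  have hsucc : ∀ i ∈ range ⌊f⌋₊, stripBound f (i + 1) = f / (i + 1 : ℕ) := fun i hi => by
    rw [stripBound_eq_div hf ((Nat.cast_le.2 (mem_range.1 hi)).trans (Nat.floor_le (by linarith))),
      max_eq_right (by simp)]
  rw [prod_range_succ', prod_congr rfl hsucc, prod_div_distrib, prod_const, card_range,
    ← Nat.cast_prod, prod_range_add_one_eq_factorial, stripBound_eq_div hf (by simp; linarith)]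
  simp

lemma prod_stripBound_le_exp {f : ℝ} (hf : 1 ≤ f) (t : Finset ℕ) :
    ∏ n ∈ t, stripBound f n ≤ Real.exp (2 * f) := calc
  ∏ n ∈ t, stripBound f n ≤ ∏ n ∈ t ∪ range (⌊f⌋₊ + 1), stripBound f n :=
    prod_mono_set_of_one_le (one_le_stripBound f) subset_union_left
  _ = ∏ n ∈ range (⌊f⌋₊ + 1), stripBound f n := by
    refine (prod_subset subset_union_right fun n _ hn => stripBound_eq_one ?_).symm
    exact (Nat.lt_floor_add_one f).trans_le (by exact_mod_cast not_lt.1 (mt mem_range.2 hn))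
  _ = f ^ ⌊f⌋₊ / ⌊f⌋₊ ! * f := prod_range_stripBound hf
  _ ≤ Real.exp f * Real.exp f :=
    mul_le_mul (Real.pow_div_factorial_le_exp f (by linarith) _)
      ((Real.add_one_le_exp f).trans' (by linarith)) (by linarith) (Real.exp_pos f).le
  _ = Real.exp (2 * f) := by rw [← Real.exp_add, two_mul]

/-- There is an absolute constant `C₀ > 1` such that: for any real
`f ≥ 2`, any `N ∈ ℕ`, any `w ∈ ℂ` and any finite list `ζ₁, …, ζ_m ∈ ℂ` such that each
unit strip `{n ≤ |Re(w - ζ_j)| < n+1}` contains at most `N` of the `ζ_j`, one has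
`∏_{j : |w - ζ_j| ≥ 1} f / |w - ζ_j| ≤ C₀^{N f}`. -/
theorem statement14 :
    ∃ C₀ : ℝ, 1 < C₀ ∧
      ∀ (f : ℝ), 2 ≤ f →
      ∀ (N : ℕ) (w : ℂ) (m : ℕ) (ζ : Fin m → ℂ),
        (∀ n : ℕ,
          (Finset.univ.filter fun j : Fin m =>
            (n : ℝ) ≤ |(w - ζ j).re| ∧ |(w - ζ j).re| < n + 1).card ≤ N) →
        (∏ j ∈ Finset.univ.filter (fun j : Fin m => 1 ≤ ‖w - ζ j‖),
            f / ‖w - ζ j‖) ≤ C₀ ^ ((N : ℝ) * f) := by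
  refine ⟨Real.exp 2, Real.one_lt_exp_iff.2 two_pos, fun f hf N w m ζ hstrip => ?_⟩
  set s := univ.filter fun j : Fin m => 1 ≤ ‖w - ζ j‖
  set strip : Fin m → ℕ := fun j => ⌊|(w - ζ j).re|⌋₊
  have hfiber : ∀ n, #{j ∈ s | strip j = n} ≤ N := fun n =>
    (card_le_card fun j hj => mem_filter.2 ⟨mem_univ j,
      (Nat.floor_eq_iff (abs_nonneg _)).1 (mem_filter.1 hj).2⟩).trans (hstrip n)
  calc ∏ j ∈ s, f / ‖w - ζ j‖ ≤ ∏ j ∈ s, stripBound f (strip j) :=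
        prod_le_prod (fun j _ => div_nonneg (by linarith) (norm_nonneg _))
          fun j hj => div_norm_le_stripBound (by linarith) (mem_filter.1 hj).2
    _ ≤ (∏ n ∈ s.image strip, stripBound f n) ^ N :=
        prod_comp_le_prod_image_pow (one_le_stripBound f) hfiber
    _ ≤ Real.exp (2 * f) ^ N :=
        pow_le_pow_left₀ (prod_nonneg fun n _ => zero_le_one.trans (one_le_stripBound f n))
          (prod_stripBound_le_exp (by linarith) _) N
    _ = Real.exp 2 ^ ((N : ℝ) * f) := by rw [← Real.exp_nat_mul, ← Real.exp_mul]; ring_nf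
end

section
/- Let d ≥ 1 and h > 0. For every polynomial p : ℝ^d → ℂ there exists a polynomial P : ℂ^d → ℂ with deg P = deg p such that for all x ∈ ℂ^d: ∫_{ℝ^d} exp(−((x−y)·(x−y))/(2h)) · p(y) · exp(−(y·y)/(2h)) dy = P(x) · exp(−(x·x)/(4h)), where z·w = Σ_{j=1}^d z_j w_j denotes the bilinear (holomorphic) dot product. Moreover, for each n ≥ 0 the induced linear map p ↦ P is a bijection from the polynomials of degree ≤ n on ℝ^d to the polynomials of degree ≤ n on ℂ^d. -/
/-!
Completing the square, `e^{-(x-y)²/(2h)} e^{-y²/(2h)} = e^{-x²/(4h)} e^{-(y-x/2)²/h}`, so by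
Fubini the integral against a monomial `y^α` factors into one-dimensional shifted Gaussian moments
`∫ t^m e^{-(t-z)²/h} dt` at `z = xᵢ/2`. For real `z`, translation and the binomial theorem give
`∑ⱼ C(m,j) M_{m-j} z^j`, where `M_k` are the centred Gaussian moments; both sides are entire in
`z`, so the identity persists for complex `z`. Hence `X^α` is sent to `M₀^d 2^{-|α|} X^α` plus
monomials `X^γ` with `γ < α`, and since `M₀ = √(πh) ≠ 0` this triangular map preserves the total
degree and is injective, hence bijective on each finite-dimensional space of polynomials of
degree `≤ n`.
-/

open Matrix MeasureTheory

noncomputable section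

open Complex Filter Finset ProbabilityTheory
open scoped Real

lemma Complex.eq_of_differentiable_of_eq_ofReal {f g : ℂ → ℂ} (hf : Differentiable ℂ f)
    (hg : Differentiable ℂ g) (hfg : ∀ x : ℝ, f x = g x) : f = g := by
  have hreal : Tendsto ofReal (nhdsWithin 0 {0}ᶜ) (nhdsWithin 0 {0}ᶜ) := by
    simpa using continuous_ofReal.continuousWithinAt.tendsto_nhdsWithin
      (x := (0 : ℝ)) (t := {(0 : ℂ)}ᶜ) fun x hx => by simpa using hx
  exact AnalyticOnNhd.eq_of_frequently_eq (z₀ := 0)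
    (analyticOnNhd_univ_iff_differentiable.2 hf) (analyticOnNhd_univ_iff_differentiable.2 hg)
    (hreal.frequently (Frequently.of_forall hfg))

lemma Finsupp.eq_of_le_of_degree_le {σ : Type*} {α β : σ →₀ ℕ} (hle : α ≤ β)
    (hdeg : β.degree ≤ α.degree) : α = β := by
  obtain ⟨γ, rfl⟩ := exists_add_of_le hle
  have hγ : γ.degree = 0 := by rw [map_add] at hdeg; omega
  rw [(Finsupp.degree_eq_zero_iff γ).1 hγ, add_zero]

namespace MvPolynomial

variable {σ : Type*}

section Semiring

variable {R : Type*} [CommSemiring R]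

lemma linearMap_apply_eq_sum {M : Type*} [AddCommMonoid M] [Module R M]
    (T : MvPolynomial σ R →ₗ[R] M) (p : MvPolynomial σ R) :
    T p = ∑ β ∈ p.support, coeff β p • T (monomial β 1) := by
  conv_lhs => rw [p.as_sum]
  rw [map_sum]
  exact sum_congr rfl fun β _ => by rw [← map_smul, smul_monomial, smul_eq_mul, mul_one]

def IsTriangular (T : MvPolynomial σ R →ₗ[R] MvPolynomial σ R) : Prop :=
  ∀ α γ, γ ∈ (T (monomial α 1)).support → γ ≤ α

variable {T : MvPolynomial σ R →ₗ[R] MvPolynomial σ R}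

lemma IsTriangular.totalDegree_apply_le (hT : IsTriangular T) (p : MvPolynomial σ R) :
    (T p).totalDegree ≤ p.totalDegree := by
  rw [linearMap_apply_eq_sum]
  refine (totalDegree_finsetSum _ _).trans (Finset.sup_le fun β hβ => ?_)
  refine (totalDegree_smul_le _ _).trans (Finset.sup_le fun γ hγ => ?_)
  exact (Finsupp.degree_mono (hT β γ hγ)).trans (le_totalDegree hβ)

lemma IsTriangular.coeff_apply_of_totalDegree_le (hT : IsTriangular T) {p : MvPolynomial σ R}
    {α : σ →₀ ℕ} (hα : α ∈ p.support) (hdeg : p.totalDegree ≤ α.degree) :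
    coeff α (T p) = coeff α p * coeff α (T (monomial α 1)) := by
  rw [linearMap_apply_eq_sum, coeff_sum]
  simp only [coeff_smul, smul_eq_mul]
  refine sum_eq_single_of_mem α hα fun β hβ hβα => ?_
  by_contra hne
  have hαβ : α ≤ β := hT β α (mem_support_iff.2 (right_ne_zero_of_mul hne))
  exact hβα (Finsupp.eq_of_le_of_degree_le hαβ ((le_totalDegree hβ).trans hdeg)).symm

end Semiring

section Ring

variable {R : Type*} [CommRing R] [NoZeroDivisors R] {T : MvPolynomial σ R →ₗ[R] MvPolynomial σ R}

lemma IsTriangular.exists_coeff_apply_ne_zero (hT : IsTriangular T)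
    (hdiag : ∀ α, coeff α (T (monomial α 1)) ≠ 0) {p : MvPolynomial σ R} (hp : p ≠ 0) :
    ∃ α : σ →₀ ℕ, p.totalDegree ≤ α.degree ∧ coeff α (T p) ≠ 0 := by
  obtain ⟨α, hα, hmax⟩ := exists_mem_eq_sup p.support (support_nonempty.2 hp) fun s => s.degree
  refine ⟨α, hmax.le, ?_⟩
  rw [hT.coeff_apply_of_totalDegree_le hα hmax.le]
  exact mul_ne_zero (mem_support_iff.1 hα) (hdiag α)

lemma IsTriangular.totalDegree_apply (hT : IsTriangular T)
    (hdiag : ∀ α, coeff α (T (monomial α 1)) ≠ 0) (p : MvPolynomial σ R) :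
    (T p).totalDegree = p.totalDegree := by
  rcases eq_or_ne p 0 with rfl | hp
  · rw [map_zero]
  obtain ⟨α, hdeg, hα⟩ := hT.exists_coeff_apply_ne_zero hdiag hp
  exact (hT.totalDegree_apply_le p).antisymm (hdeg.trans (le_totalDegree (mem_support_iff.2 hα)))

lemma IsTriangular.injective (hT : IsTriangular T)
    (hdiag : ∀ α, coeff α (T (monomial α 1)) ≠ 0) : Function.Injective T := by
  refine (injective_iff_map_eq_zero T).2 fun p hTp => ?_
  by_contra hp
  obtain ⟨α, -, hα⟩ := hT.exists_coeff_apply_ne_zero hdiag hp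
  exact hα (by rw [hTp, coeff_zero])

end Ring

lemma bijOn_setOf_totalDegree_le {K : Type*} [Field K] [Finite σ]
    {T : MvPolynomial σ K →ₗ[K] MvPolynomial σ K} (hdeg : ∀ p, (T p).totalDegree = p.totalDegree)
    (hinj : Function.Injective T) (n : ℕ) :
    Set.BijOn T {p | p.totalDegree ≤ n} {p | p.totalDegree ≤ n} := by
  have hmaps : ∀ p ∈ restrictTotalDegree σ K n, T p ∈ restrictTotalDegree σ K n := fun p => by
    simp only [mem_restrictTotalDegree, hdeg, imp_self]
  have hsurj : Function.Surjective (T.restrict hmaps) :=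
    LinearMap.injective_iff_surjective.1 fun a b hab =>
      Subtype.ext (hinj (congrArg Subtype.val hab))
  refine ⟨fun p hp => (hdeg p).trans_le hp, hinj.injOn, fun q hq => ?_⟩
  obtain ⟨⟨p, hp⟩, hpq⟩ := hsurj ⟨q, (mem_restrictTotalDegree _ _ _).2 hq⟩
  exact ⟨p, (mem_restrictTotalDegree _ _ _).1 hp, congrArg Subtype.val hpq⟩

end MvPolynomial

section GaussianMoments

variable {h : ℝ}

def gaussianMoment (h : ℝ) (k : ℕ) : ℂ := ∫ t : ℝ, (t : ℂ) ^ k * cexp (-(t : ℂ) ^ 2 / h)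

def shiftedGaussianMoment (h : ℝ) (m : ℕ) (z : ℂ) : ℂ :=
  ∫ t : ℝ, (t : ℂ) ^ m * cexp (-((t : ℂ) - z) ^ 2 / h)

lemma norm_cexp_neg_sub_sq_div_le (hh : 0 < h) (z : ℂ) (t : ℝ) :
    ‖cexp (-((t : ℂ) - z) ^ 2 / h)‖ ≤ Real.exp (‖z‖ ^ 2 / h) * Real.exp (-(2 * h)⁻¹ * t ^ 2) := by
  rw [norm_exp, ← Real.exp_add, Real.exp_le_exp, div_eq_mul_inv, mul_comm,
    ← ofReal_inv, re_ofReal_mul]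
  have hre : (-((t : ℂ) - z) ^ 2).re = z.im ^ 2 - (t - z.re) ^ 2 := by
    simp [sq]
  have hz : ‖z‖ ^ 2 = z.re ^ 2 + z.im ^ 2 := by rw [Complex.sq_norm, normSq_apply]; ring
  rw [hre, hz, ← sub_nonneg]
  have key : (z.re ^ 2 + z.im ^ 2) / h + -(2 * h)⁻¹ * t ^ 2 - h⁻¹ * (z.im ^ 2 - (t - z.re) ^ 2)
      = (t - 2 * z.re) ^ 2 / (2 * h) := by field_simp; ring
  rw [key]; positivity

lemma integrable_pow_mul_cexp_neg_sub_sq (hh : 0 < h) (m : ℕ) (z : ℂ) :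
    Integrable (fun t : ℝ => (t : ℂ) ^ m * cexp (-((t : ℂ) - z) ^ 2 / h)) := by
  have hg := integrable_rpow_mul_exp_neg_mul_sq (b := (2 * h)⁻¹) (by positivity)
    (s := m) (by linarith [(m.cast_nonneg : (0 : ℝ) ≤ m)])
  refine (hg.norm.const_mul (Real.exp (‖z‖ ^ 2 / h))).mono' (by fun_prop) (ae_of_all _ fun t => ?_)
  simp only [Real.rpow_natCast, norm_mul, norm_pow, norm_real, Real.norm_eq_abs, Real.abs_exp]
  calc |t| ^ m * ‖cexp (-((t : ℂ) - z) ^ 2 / h)‖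
      ≤ |t| ^ m * (Real.exp (‖z‖ ^ 2 / h) * Real.exp (-(2 * h)⁻¹ * t ^ 2)) := by
        gcongr; exact norm_cexp_neg_sub_sq_div_le hh z t
    _ = _ := by ring

lemma integrable_pow_mul_cexp_neg_sq (hh : 0 < h) (k : ℕ) :
    Integrable (fun t : ℝ => (t : ℂ) ^ k * cexp (-(t : ℂ) ^ 2 / h)) := by
  simpa using integrable_pow_mul_cexp_neg_sub_sq hh k 0

lemma shiftedGaussianMoment_ofReal (hh : 0 < h) (m : ℕ) (r : ℝ) :
    shiftedGaussianMoment h m r =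
      ∑ j ∈ range (m + 1), (m.choose j : ℂ) * gaussianMoment h (m - j) * (r : ℂ) ^ j := by
  have htranslate : shiftedGaussianMoment h m r =
      ∫ t : ℝ, ((r : ℂ) + t) ^ m * cexp (-(t : ℂ) ^ 2 / h) := by
    rw [shiftedGaussianMoment, ← integral_add_right_eq_self _ r]
    simp only [ofReal_add, add_sub_cancel_right, add_comm (r : ℂ)]
  have hexpand : ∀ t : ℝ, ((r : ℂ) + t) ^ m * cexp (-(t : ℂ) ^ 2 / h) =
      ∑ j ∈ range (m + 1), ((m.choose j : ℂ) * (r : ℂ) ^ j) *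
        ((t : ℂ) ^ (m - j) * cexp (-(t : ℂ) ^ 2 / h)) := fun t => by
    rw [add_pow, sum_mul]
    exact sum_congr rfl fun j _ => by ring
  simp_rw [htranslate, hexpand]
  rw [integral_finsetSum _ fun j _ => (integrable_pow_mul_cexp_neg_sq hh _).const_mul _]
  exact sum_congr rfl fun j _ => by rw [integral_const_mul, gaussianMoment]; ring

/- Completing the square: the moment is an entire factor times the `m`-th moment of an exponential
tilt of `𝒩(0, h/2)`, which is holomorphic in the tilt by the theory of the complex MGF. -/
lemma shiftedGaussianMoment_eq_integral_gaussianReal (hh : 0 < h) (m : ℕ) (z : ℂ) :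
    shiftedGaussianMoment h m z = √(π * h) * cexp (-z ^ 2 / h) *
      ∫ t, (t : ℂ) ^ m * cexp (2 * z / h * t) ∂gaussianReal 0 (h / 2).toNNReal := by
  have hv : (h / 2).toNNReal ≠ 0 := by simpa using hh
  have hs : (√(π * h) : ℂ) ≠ 0 := ofReal_ne_zero.2 (by positivity)
  rw [shiftedGaussianMoment, integral_gaussianReal_eq_integral_smul hv, ← integral_const_mul]
  refine integral_congr_ae (ae_of_all _ fun t => ?_)
  have hexp : -z ^ 2 / h + -(t : ℂ) ^ 2 / (2 * (h / 2)) + 2 * z / h * t =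
      -((t : ℂ) - z) ^ 2 / h := by
    field_simp
    ring
  simp only [gaussianPDFReal, Real.coe_toNNReal _ (half_pos hh).le, real_smul, ofReal_mul,
    ofReal_inv, ofReal_exp, ofReal_div, ofReal_neg, ofReal_pow, sub_zero, ofReal_ofNat,
    show 2 * π * (h / 2) = π * h by ring]
  calc _ = (t : ℂ) ^ m * (cexp (-z ^ 2 / h) * cexp (-(t : ℂ) ^ 2 / (2 * (h / 2))) *
        cexp (2 * z / h * t)) * (√(π * h) * (√(π * h) : ℂ)⁻¹) := by
        rw [← exp_add, ← exp_add, hexp, mul_inv_cancel₀ hs, mul_one]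
    _ = _ := by ring

lemma differentiable_shiftedGaussianMoment (hh : 0 < h) (m : ℕ) :
    Differentiable ℂ (shiftedGaussianMoment h m) := by
  intro z
  have hmoment := (hasDerivAt_integral_pow_mul_exp (X := fun t => t)
    (μ := gaussianReal 0 (h / 2).toNNReal) (z := 2 * z / h)
    (by rw [integrableExpSet_fun_id_gaussianReal, interior_univ]; trivial) m).differentiableAt
  rw [funext (shiftedGaussianMoment_eq_integral_gaussianReal hh m)]
  exact (by fun_prop : DifferentiableAt ℂ (fun z : ℂ => √(π * h) * cexp (-z ^ 2 / h)) z).mul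
    (hmoment.comp (f := fun z : ℂ => 2 * z / h) z (by fun_prop))

lemma shiftedGaussianMoment_eq_sum (hh : 0 < h) (m : ℕ) (z : ℂ) :
    shiftedGaussianMoment h m z =
      ∑ j ∈ range (m + 1), (m.choose j : ℂ) * gaussianMoment h (m - j) * z ^ j := by
  have := Complex.eq_of_differentiable_of_eq_ofReal (differentiable_shiftedGaussianMoment hh m)
    (g := fun z => ∑ j ∈ range (m + 1), (m.choose j : ℂ) * gaussianMoment h (m - j) * z ^ j)
    (by fun_prop) (shiftedGaussianMoment_ofReal hh m)
  exact congrFun this z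

lemma gaussianMoment_zero_ne_zero (hh : 0 < h) : gaussianMoment h 0 ≠ 0 := by
  have hb : 0 < ((h : ℂ)⁻¹).re := by simpa using hh
  have h0 : gaussianMoment h 0 = (π / (h : ℂ)⁻¹) ^ (1 / 2 : ℂ) := by
    rw [← integral_gaussian_complex hb, gaussianMoment]
    congr 1; funext t; simp only [pow_zero, one_mul]; ring_nf
  simp [h0, cpow_eq_zero_iff, Real.pi_ne_zero, hh.ne']

end GaussianMoments

section Bargmann

open MvPolynomial

variable {h : ℝ}

-- The FBI kernel `e^{iφ₀(x,y)/h}` times the Gaussian weight `e^{-y²/(2h)}`, in one variable.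
def fbiKernel (h : ℝ) (x y : ℂ) : ℂ :=
  cexp (-((x - y) * (x - y)) / (2 * h)) * cexp (-(y * y) / (2 * h))

lemma fbiKernel_eq (hh : h ≠ 0) (x y : ℂ) :
    fbiKernel h x y = cexp (-(x * x) / (4 * h)) * cexp (-(y - x / 2) ^ 2 / h) := by
  have hh' : (h : ℂ) ≠ 0 := ofReal_ne_zero.2 hh
  rw [fbiKernel, ← exp_add, ← exp_add]
  congr 1
  field_simp
  ring

-- The coefficients of `x ↦ shiftedGaussianMoment h m (x / 2)`.
def gaussCoeff (h : ℝ) (m j : ℕ) : ℂ := (m.choose j : ℂ) * gaussianMoment h (m - j) / 2 ^ j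

lemma integrable_pow_mul_fbiKernel (hh : 0 < h) (m : ℕ) (x : ℂ) :
    Integrable (fun t : ℝ => (t : ℂ) ^ m * fbiKernel h x t) := by
  simp_rw [fbiKernel_eq hh.ne', mul_left_comm _ (cexp _)]
  exact (integrable_pow_mul_cexp_neg_sub_sq hh m (x / 2)).const_mul _

lemma integral_pow_mul_fbiKernel (hh : 0 < h) (m : ℕ) (x : ℂ) :
    ∫ t : ℝ, (t : ℂ) ^ m * fbiKernel h x t =
      cexp (-(x * x) / (4 * h)) * ∑ j ∈ range (m + 1), gaussCoeff h m j * x ^ j := by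
  simp_rw [fbiKernel_eq hh.ne', mul_left_comm _ (cexp _)]
  rw [integral_const_mul, ← shiftedGaussianMoment, shiftedGaussianMoment_eq_sum hh]
  congr 1
  refine sum_congr rfl fun j _ => ?_
  rw [gaussCoeff, div_pow]
  field_simp

variable {ι : Type*} [Fintype ι]

lemma Complex.exp_neg_dotProduct_self_div (v : ι → ℂ) (a : ℂ) :
    cexp (-(v ⬝ᵥ v) / a) = ∏ i, cexp (-(v i * v i) / a) := by
  rw [← exp_sum, dotProduct, ← sum_div, ← sum_neg_distrib]

lemma eval_monomial_mul_prod_fbiKernel (α : ι →₀ ℕ) (x : ι → ℂ) (y : ι → ℝ) :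
    eval (fun i => (y i : ℂ)) (monomial α 1) * ∏ i, fbiKernel h (x i) (y i) =
      ∏ i, ((y i : ℂ) ^ α i * fbiKernel h (x i) (y i)) := by
  rw [eval_monomial, one_mul, Finsupp.prod_fintype _ _ fun i => pow_zero _, prod_mul_distrib]

lemma integrable_eval_monomial_mul_prod_fbiKernel (hh : 0 < h) (α : ι →₀ ℕ) (x : ι → ℂ) :
    Integrable fun y : ι → ℝ =>
      eval (fun i => (y i : ℂ)) (monomial α 1) * ∏ i, fbiKernel h (x i) (y i) := by
  simp_rw [eval_monomial_mul_prod_fbiKernel]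
  exact Integrable.fintype_prod_dep fun i => integrable_pow_mul_fbiKernel hh (α i) (x i)

lemma exp_dotProduct_mul_mul_exp_eq_prod_fbiKernel (x y : ι → ℂ) (q : ℂ) :
    cexp (-((x - y) ⬝ᵥ (x - y)) / (2 * h)) * q * cexp (-(y ⬝ᵥ y) / (2 * h)) =
      q * ∏ i, fbiKernel h (x i) (y i) := by
  simp only [exp_neg_dotProduct_self_div, fbiKernel, Pi.sub_apply, prod_mul_distrib]
  ring

variable [DecidableEq ι]

def bargmannImage (h : ℝ) (α : ι →₀ ℕ) : MvPolynomial ι ℂ :=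
  ∑ γ ∈ Iic α, monomial γ (∏ i, gaussCoeff h (α i) (γ i))

lemma coeff_bargmannImage (h : ℝ) (α γ : ι →₀ ℕ) :
    coeff γ (bargmannImage h α) = if γ ≤ α then ∏ i, gaussCoeff h (α i) (γ i) else 0 := by
  simp only [bargmannImage, coeff_sum, coeff_monomial, sum_ite_eq', mem_Iic]

lemma eval_bargmannImage (h : ℝ) (α : ι →₀ ℕ) (x : ι → ℂ) :
    eval x (bargmannImage h α) = ∏ i, ∑ j ∈ range (α i + 1), gaussCoeff h (α i) j * x i ^ j := by
  rw [prod_univ_sum, bargmannImage, map_sum]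
  refine sum_equiv Finsupp.equivFunOnFinite (fun γ => ?_) fun γ _ => ?_
  · simp [Finsupp.le_def]
  · rw [eval_monomial, Finsupp.prod_fintype _ _ fun i => pow_zero _, ← prod_mul_distrib]
    rfl

def bargmannTransform (h : ℝ) : MvPolynomial ι ℂ →ₗ[ℂ] MvPolynomial ι ℂ :=
  (basisMonomials ι ℂ).constr ℂ (bargmannImage h)

lemma bargmannTransform_monomial (h : ℝ) (α : ι →₀ ℕ) :
    bargmannTransform h (monomial α 1) = bargmannImage h α := by
  have := (basisMonomials ι ℂ).constr_basis ℂ (bargmannImage h) α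
  rwa [coe_basisMonomials] at this

lemma gaussCoeff_self_ne_zero (hh : 0 < h) (m : ℕ) : gaussCoeff h m m ≠ 0 := by
  rw [gaussCoeff, Nat.choose_self, Nat.sub_self, Nat.cast_one, one_mul]
  exact div_ne_zero (gaussianMoment_zero_ne_zero hh) (pow_ne_zero _ two_ne_zero)

lemma coeff_bargmannTransform_monomial_self_ne_zero (hh : 0 < h) (α : ι →₀ ℕ) :
    coeff α (bargmannTransform h (monomial α 1)) ≠ 0 := by
  rw [bargmannTransform_monomial, coeff_bargmannImage, if_pos le_rfl]
  exact prod_ne_zero_iff.2 fun i _ => gaussCoeff_self_ne_zero hh (α i)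

lemma isTriangular_bargmannTransform : IsTriangular (bargmannTransform (ι := ι) h) := by
  intro α γ hγ
  by_contra hγα
  rw [mem_support_iff, bargmannTransform_monomial, coeff_bargmannImage, if_neg hγα] at hγ
  exact hγ rfl

lemma totalDegree_bargmannTransform (hh : 0 < h) (p : MvPolynomial ι ℂ) :
    (bargmannTransform h p).totalDegree = p.totalDegree :=
  isTriangular_bargmannTransform.totalDegree_apply
    (coeff_bargmannTransform_monomial_self_ne_zero hh) p

lemma injective_bargmannTransform (hh : 0 < h) :
    Function.Injective (bargmannTransform (ι := ι) h) :=
  isTriangular_bargmannTransform.injective (coeff_bargmannTransform_monomial_self_ne_zero hh)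

lemma integral_eval_monomial_mul_prod_fbiKernel (hh : 0 < h) (α : ι →₀ ℕ) (x : ι → ℂ) :
    ∫ y : ι → ℝ, eval (fun i => (y i : ℂ)) (monomial α 1) * ∏ i, fbiKernel h (x i) (y i) =
      cexp (-(x ⬝ᵥ x) / (4 * h)) * eval x (bargmannImage h α) := by
  simp_rw [eval_monomial_mul_prod_fbiKernel]
  rw [integral_fintype_prod_volume_eq_prod (fun i (t : ℝ) => (t : ℂ) ^ α i * fbiKernel h (x i) t)]
  simp_rw [integral_pow_mul_fbiKernel hh]
  rw [prod_mul_distrib, eval_bargmannImage, exp_neg_dotProduct_self_div]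

lemma integral_eval_mul_prod_fbiKernel (hh : 0 < h) (p : MvPolynomial ι ℂ) (x : ι → ℂ) :
    ∫ y : ι → ℝ, eval (fun i => (y i : ℂ)) p * ∏ i, fbiKernel h (x i) (y i) =
      cexp (-(x ⬝ᵥ x) / (4 * h)) * eval x (bargmannTransform h p) := by
  have hsplit : ∀ y : ι → ℝ, eval (fun i => (y i : ℂ)) p * ∏ i, fbiKernel h (x i) (y i) =
      ∑ α ∈ p.support, coeff α p *
        (eval (fun i => (y i : ℂ)) (monomial α 1) * ∏ i, fbiKernel h (x i) (y i)) := fun y => by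
    conv_lhs => rw [p.as_sum]
    rw [map_sum, sum_mul]
    refine sum_congr rfl fun α _ => ?_
    rw [eval_monomial, eval_monomial, one_mul, mul_assoc]
  simp_rw [hsplit]
  rw [integral_finsetSum _ fun α _ =>
    (integrable_eval_monomial_mul_prod_fbiKernel hh α x).const_mul _]
  simp_rw [integral_const_mul, integral_eval_monomial_mul_prod_fbiKernel hh]
  rw [linearMap_apply_eq_sum (bargmannTransform h) p, map_sum, mul_sum]
  refine sum_congr rfl fun α _ => ?_
  rw [smul_eval, bargmannTransform_monomial]
  ring

end Bargmann

theorem statement17_general (d : ℕ) (h : ℝ) (hh : 0 < h) :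
    ∃ T : MvPolynomial (Fin d) ℂ →ₗ[ℂ] MvPolynomial (Fin d) ℂ,
      (∀ p : MvPolynomial (Fin d) ℂ,
        (T p).totalDegree = p.totalDegree ∧
        ∀ x : Fin d → ℂ,
          (∫ y : Fin d → ℝ,
            Complex.exp (-(((x - fun i => ((y i : ℝ) : ℂ)) ⬝ᵥ
                (x - fun i => ((y i : ℝ) : ℂ)))) / (2 * (h : ℂ))) *
              MvPolynomial.eval (fun i => ((y i : ℝ) : ℂ)) p *
              Complex.exp (-(((fun i => ((y i : ℝ) : ℂ)) ⬝ᵥ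
                fun i => ((y i : ℝ) : ℂ))) / (2 * (h : ℂ)))) =
          MvPolynomial.eval x (T p) * Complex.exp (-(x ⬝ᵥ x) / (4 * (h : ℂ)))) ∧
      (∀ n : ℕ, Set.BijOn (⇑T)
        {p : MvPolynomial (Fin d) ℂ | p.totalDegree ≤ n}
        {p : MvPolynomial (Fin d) ℂ | p.totalDegree ≤ n}) := by
  refine ⟨bargmannTransform h, fun p => ⟨totalDegree_bargmannTransform hh p, fun x => ?_⟩,
    MvPolynomial.bijOn_setOf_totalDegree_le (totalDegree_bargmannTransform hh)
      (injective_bargmannTransform hh)⟩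
  simp_rw [exp_dotProduct_mul_mul_exp_eq_prod_fbiKernel]
  rw [integral_eval_mul_prod_fbiKernel hh, mul_comm]

/-- The FBI–Bargmann transform with phase `φ₀(x,y) = (i/2)(x-y)²` maps
Hermite-type functions `p(y) e^{-y²/(2h)}` to `P(x) e^{-x²/(4h)}`: there is a linear map
`T` on polynomials with `deg(T p) = deg p`, such that for every polynomial `p` and every
`x ∈ ℂ^d`,
`∫_{ℝ^d} e^{-((x-y)·(x-y))/(2h)} p(y) e^{-(y·y)/(2h)} dy = (T p)(x) e^{-(x·x)/(4h)}`,
and for every `n` the map `T` is a bijection from polynomials of degree `≤ n` onto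
polynomials of degree `≤ n`. -/
theorem statement17 (d : ℕ) (hd : 1 ≤ d) (h : ℝ) (hh : 0 < h) :
    ∃ T : MvPolynomial (Fin d) ℂ →ₗ[ℂ] MvPolynomial (Fin d) ℂ,
      (∀ p : MvPolynomial (Fin d) ℂ,
        (T p).totalDegree = p.totalDegree ∧
        ∀ x : Fin d → ℂ,
          (∫ y : Fin d → ℝ,
            Complex.exp (-(((x - fun i => ((y i : ℝ) : ℂ)) ⬝ᵥ
                (x - fun i => ((y i : ℝ) : ℂ)))) / (2 * (h : ℂ))) *
              MvPolynomial.eval (fun i => ((y i : ℝ) : ℂ)) p *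
              Complex.exp (-(((fun i => ((y i : ℝ) : ℂ)) ⬝ᵥ
                fun i => ((y i : ℝ) : ℂ))) / (2 * (h : ℂ)))) =
          MvPolynomial.eval x (T p) * Complex.exp (-(x ⬝ᵥ x) / (4 * (h : ℂ)))) ∧
      (∀ n : ℕ, Set.BijOn (⇑T)
        {p : MvPolynomial (Fin d) ℂ | p.totalDegree ≤ n}
        {p : MvPolynomial (Fin d) ℂ | p.totalDegree ≤ n}) :=
  statement17_general d h hh
end
end

section
/- Let a ∈ ℝ with a ≠ 0, and consider the quadratic form of Kramers-Fokker-Planck type q(x,y,ξ,η) = ½(y² + η²) + i(yξ − a·xη) on ℝ⁴ (so d = 2, with coordinates (x,y;ξ,η)), with Hamilton map F. Then ker(Re F) = {(x,0,ξ,0) : x,ξ ∈ ℝ}, ker(Re F ∘ Im F) = {(0,y,0,η) : y,η ∈ ℝ}, and consequently the singular space S = (⋂_{k=0}^{3} ker(Re F∘(Im F)^k)) ∩ ℝ⁴ = {0}. -/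
open Matrix

noncomputable section
set_option maxHeartbeats 1000000

/-- For the Kramers–Fokker–Planck quadratic form
`q(x,y,ξ,η) = ½(y² + η²) + i(yξ - a x η)` on `ℝ⁴` (`a ≠ 0`), with Hamilton map `F`
(characterized by skewness w.r.t. `σ` and `q(X) = σ(X, F X)`), one has
`ker(Re F) = {(x,0,ξ,0)}`, `ker(Re F ∘ Im F) = {(0,y,0,η)}`, and consequently the
singular space `S = (⋂_{k=0}^{3} ker(Re F ∘ (Im F)^k)) ∩ ℝ⁴` is trivial. -/
theorem statement18 (a : ℝ) (ha : a ≠ 0)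
    (F : Matrix (Fin 2 ⊕ Fin 2) (Fin 2 ⊕ Fin 2) ℂ)
    (hFskew : ∀ X Y : Fin 2 ⊕ Fin 2 → ℂ,
      X ⬝ᵥ (Jmat 2 ℂ) *ᵥ (F *ᵥ Y) = -((F *ᵥ X) ⬝ᵥ (Jmat 2 ℂ) *ᵥ Y))
    (hFq : ∀ X : Fin 2 ⊕ Fin 2 → ℝ,
      (1 / 2 : ℂ) * (((X (Sum.inl 1) : ℂ)) ^ 2 + ((X (Sum.inr 1) : ℂ)) ^ 2) +
          Complex.I * ((X (Sum.inl 1) : ℂ) * (X (Sum.inr 0) : ℂ) -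
            (a : ℂ) * (X (Sum.inl 0) : ℂ) * (X (Sum.inr 1) : ℂ)) =
        (fun i => (X i : ℂ)) ⬝ᵥ (Jmat 2 ℂ) *ᵥ (F *ᵥ fun i => (X i : ℂ))) :
    ({X : Fin 2 ⊕ Fin 2 → ℝ | (F.map Complex.re) *ᵥ X = 0} =
        {X : Fin 2 ⊕ Fin 2 → ℝ | X (Sum.inl 1) = 0 ∧ X (Sum.inr 1) = 0}) ∧
    ({X : Fin 2 ⊕ Fin 2 → ℝ | (F.map Complex.re * F.map Complex.im) *ᵥ X = 0} =
        {X : Fin 2 ⊕ Fin 2 → ℝ | X (Sum.inl 0) = 0 ∧ X (Sum.inr 0) = 0}) ∧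
    ({X : Fin 2 ⊕ Fin 2 → ℝ | ∀ k : ℕ, k ≤ 3 →
        (F.map Complex.re * (F.map Complex.im) ^ k) *ᵥ X = 0} = {0}) := by
  have sxy := hFskew (Sum.elim ![1,0] ![0,0]) (Sum.elim ![0,1] ![0,0])
  have sxc := hFskew (Sum.elim ![1,0] ![0,0]) (Sum.elim ![0,0] ![1,0])
  have sxe := hFskew (Sum.elim ![1,0] ![0,0]) (Sum.elim ![0,0] ![0,1])
  have syc := hFskew (Sum.elim ![0,1] ![0,0]) (Sum.elim ![0,0] ![1,0])
  have sye := hFskew (Sum.elim ![0,1] ![0,0]) (Sum.elim ![0,0] ![0,1])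
  have sce := hFskew (Sum.elim ![0,0] ![1,0]) (Sum.elim ![0,0] ![0,1])
  have qx := hFq (Sum.elim ![1,0] ![0,0])
  have qy := hFq (Sum.elim ![0,1] ![0,0])
  have qc := hFq (Sum.elim ![0,0] ![1,0])
  have qe := hFq (Sum.elim ![0,0] ![0,1])
  have qxy := hFq (Sum.elim ![1,1] ![0,0])
  have qxc := hFq (Sum.elim ![1,0] ![1,0])
  have qxe := hFq (Sum.elim ![1,0] ![0,1])
  have qyc := hFq (Sum.elim ![0,1] ![1,0])
  have qye := hFq (Sum.elim ![0,1] ![0,1])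
  have qce := hFq (Sum.elim ![0,0] ![1,1])
  simp [Jmat, Matrix.mulVec, dotProduct, Fintype.sum_sum_type, Fin.sum_univ_two]
    at sxy sxc sxe syc sye sce qx qy qc qe qxy qxc qxe qyc qye qce
  -- 16 entries of F
  have eA : F (Sum.inl 0) (Sum.inl 0) = 0 := by linear_combination (-qxc - sxc + qx + qc) / 2
  have eN : F (Sum.inr 0) (Sum.inr 0) = 0 := by linear_combination -sxc - eA
  have eE : F (Sum.inl 1) (Sum.inl 0) = -(Complex.I * a) / 2 := by
    linear_combination (-qxe - sxe + qx + qe) / 2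
  have eP : F (Sum.inr 0) (Sum.inr 1) = Complex.I * a / 2 := by linear_combination -sxe - eE
  have eB : F (Sum.inl 0) (Sum.inl 1) = Complex.I / 2 := by
    linear_combination (-qyc - syc + qy + qc) / 2
  have eS : F (Sum.inr 1) (Sum.inr 0) = -(Complex.I / 2) := by linear_combination -syc - eB
  have eG : F (Sum.inl 1) (Sum.inl 1) = 0 := by linear_combination (-qye - sye + qy + qe) / 2
  have eT : F (Sum.inr 1) (Sum.inr 1) = 0 := by linear_combination -sye - eG
  have eD : F (Sum.inl 0) (Sum.inr 1) = 0 := by linear_combination (-qce + sce + qc + qe) / 2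
  have eH : F (Sum.inl 1) (Sum.inr 0) = 0 := by linear_combination -sce + eD
  have eQ : F (Sum.inr 1) (Sum.inl 0) = 0 := by linear_combination (qxy - sxy - qx - qy) / 2
  have eM : F (Sum.inr 0) (Sum.inl 1) = 0 := by linear_combination sxy + eQ
  have eL : F (Sum.inr 0) (Sum.inl 0) = 0 := qx
  have eC : F (Sum.inl 0) (Sum.inr 0) = 0 := qc.symm
  have eR : F (Sum.inr 1) (Sum.inl 1) = -(1 / 2) := by linear_combination qy
  have eK : F (Sum.inl 1) (Sum.inr 1) = 1 / 2 := by linear_combination -qe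
  -- real and imaginary parts
  have hRe : F.map Complex.re =
      Matrix.fromBlocks 0 !![0,0;0,1/2] !![0,0;0,-(1/2)] 0 := by
    ext i j
    rcases i with r|r <;> rcases j with s|s <;> fin_cases r <;> fin_cases s <;>
      simp [eA,eB,eC,eD,eE,eG,eH,eK,eL,eM,eN,eP,eQ,eR,eS,eT] <;> ring
  have hIm : F.map Complex.im =
      Matrix.fromBlocks !![0,1/2;-(a/2),0] 0 0 !![0,a/2;-(1/2),0] := by
    ext i j
    rcases i with r|r <;> rcases j with s|s <;> fin_cases r <;> fin_cases s <;>
      simp [eA,eB,eC,eD,eE,eG,eH,eK,eL,eM,eN,eP,eQ,eR,eS,eT] <;> ring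
  have hP : F.map Complex.re * F.map Complex.im =
      Matrix.fromBlocks 0 !![0,0;-(1/4),0] !![0,0;a/4,0] 0 := by
    rw [hRe, hIm]
    ext i j
    rcases i with r|r <;> rcases j with s|s <;> fin_cases r <;> fin_cases s <;>
      simp [Matrix.mul_apply, Fintype.sum_sum_type, Fin.sum_univ_two] <;> ring
  have g1 : ({X : Fin 2 ⊕ Fin 2 → ℝ | (F.map Complex.re) *ᵥ X = 0} =
      {X : Fin 2 ⊕ Fin 2 → ℝ | X (Sum.inl 1) = 0 ∧ X (Sum.inr 1) = 0}) := by
    ext X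
    simp [hRe, Matrix.mulVec, dotProduct, Fintype.sum_sum_type, Fin.sum_univ_two,
      funext_iff, Sum.forall, Fin.forall_fin_two]
    tauto
  have g2 : ({X : Fin 2 ⊕ Fin 2 → ℝ | (F.map Complex.re * F.map Complex.im) *ᵥ X = 0} =
      {X : Fin 2 ⊕ Fin 2 → ℝ | X (Sum.inl 0) = 0 ∧ X (Sum.inr 0) = 0}) := by
    ext X
    simp [hP, Matrix.mulVec, dotProduct, Fintype.sum_sum_type, Fin.sum_univ_two,
      funext_iff, Sum.forall, Fin.forall_fin_two, ha]
    tauto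
  refine ⟨g1, g2, ?_⟩
  ext X
  simp only [Set.mem_setOf_eq, Set.mem_singleton_iff]
  constructor
  · intro h
    have h0 := h 0 (by norm_num)
    have h1 := h 1 (by norm_num)
    rw [pow_zero, mul_one] at h0
    rw [pow_one] at h1
    have hx : X ∈ {X : Fin 2 ⊕ Fin 2 → ℝ | X (Sum.inl 1) = 0 ∧ X (Sum.inr 1) = 0} := by
      rw [← g1]; exact h0
    have hy : X ∈ {X : Fin 2 ⊕ Fin 2 → ℝ | X (Sum.inl 0) = 0 ∧ X (Sum.inr 0) = 0} := by
      rw [← g2]; exact h1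
    funext i
    rcases i with r|r <;> fin_cases r
    · exact hy.1
    · exact hx.1
    · exact hy.2
    · exact hx.2
  · rintro rfl
    intro k hk
    simp
end
end

section
/- Let α, β, γ ∈ ℝ, not all zero, and consider the quadratic form q(x₁,x₂,ξ₁,ξ₂) = ξ₁² + ξ₂² + x₁² + i(αx₁² + 2βx₁x₂ + γx₂²) on ℝ⁴ (d = 2), with Hamilton map F and singular space S = (⋂_{k=0}^{3} ker(Re F∘(Im F)^k)) ∩ ℝ⁴. Then S = {0} if and only if (β,γ) ≠ (0,0); and if β = γ = 0 then S = {(0, x₂, 0, 0) : x₂ ∈ ℝ}. -/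
open Matrix

noncomputable section

set_option maxHeartbeats 2000000 in
/-- For the quadratic form
`q(x₁,x₂,ξ₁,ξ₂) = ξ₁² + ξ₂² + x₁² + i(αx₁² + 2βx₁x₂ + γx₂²)` on `ℝ⁴`, with `(α,β,γ)`
not all zero and Hamilton map `F` (characterized by skewness w.r.t. `σ` and
`q(X) = σ(X, F X)`), the singular space
`S = (⋂_{k=0}^{3} ker(Re F ∘ (Im F)^k)) ∩ ℝ⁴` is trivial iff `(β,γ) ≠ (0,0)`;
and if `β = γ = 0` then `S = {(0, x₂, 0, 0) : x₂ ∈ ℝ}`. -/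
theorem statement19 (α β γ : ℝ) (hnz : ¬(α = 0 ∧ β = 0 ∧ γ = 0))
    (F : Matrix (Fin 2 ⊕ Fin 2) (Fin 2 ⊕ Fin 2) ℂ)
    (hFskew : ∀ X Y : Fin 2 ⊕ Fin 2 → ℂ,
      X ⬝ᵥ (Jmat 2 ℂ) *ᵥ (F *ᵥ Y) = -((F *ᵥ X) ⬝ᵥ (Jmat 2 ℂ) *ᵥ Y))
    (hFq : ∀ X : Fin 2 ⊕ Fin 2 → ℝ,
      ((X (Sum.inr 0) : ℂ)) ^ 2 + ((X (Sum.inr 1) : ℂ)) ^ 2 + ((X (Sum.inl 0) : ℂ)) ^ 2 +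
          Complex.I * ((α : ℂ) * ((X (Sum.inl 0) : ℂ)) ^ 2 +
            2 * (β : ℂ) * (X (Sum.inl 0) : ℂ) * (X (Sum.inl 1) : ℂ) +
            (γ : ℂ) * ((X (Sum.inl 1) : ℂ)) ^ 2) =
        (fun i => (X i : ℂ)) ⬝ᵥ (Jmat 2 ℂ) *ᵥ (F *ᵥ fun i => (X i : ℂ))) :
    (({X : Fin 2 ⊕ Fin 2 → ℝ | ∀ k : ℕ, k ≤ 3 →
          (F.map Complex.re * (F.map Complex.im) ^ k) *ᵥ X = 0} = {0}) ↔
        ¬(β = 0 ∧ γ = 0)) ∧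
    (β = 0 → γ = 0 →
      {X : Fin 2 ⊕ Fin 2 → ℝ | ∀ k : ℕ, k ≤ 3 →
          (F.map Complex.re * (F.map Complex.im) ^ k) *ᵥ X = 0} =
        {X : Fin 2 ⊕ Fin 2 → ℝ |
          X (Sum.inl 0) = 0 ∧ X (Sum.inr 0) = 0 ∧ X (Sum.inr 1) = 0}) := by
  -- Step 1: determine `F` explicitly from the two characterizing properties.
  have hF : F = Matrix.fromBlocks 0 1
      (-!![1 + (α:ℂ) * Complex.I, (β:ℂ) * Complex.I;
           (β:ℂ) * Complex.I, (γ:ℂ) * Complex.I]) 0 := by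
    have hd1 := hFq (Sum.elim ![1,0] ![0,0])
    have hd2 := hFq (Sum.elim ![0,1] ![0,0])
    have hd3 := hFq (Sum.elim ![0,0] ![1,0])
    have hd4 := hFq (Sum.elim ![0,0] ![0,1])
    have hc12 := hFq (Sum.elim ![1,1] ![0,0])
    have hc13 := hFq (Sum.elim ![1,0] ![1,0])
    have hc14 := hFq (Sum.elim ![1,0] ![0,1])
    have hc23 := hFq (Sum.elim ![0,1] ![1,0])
    have hc24 := hFq (Sum.elim ![0,1] ![0,1])
    have hc34 := hFq (Sum.elim ![0,0] ![1,1])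
    have hs1 := hFskew (Sum.elim ![0,0] ![1,0]) (Sum.elim ![(1:ℂ),0] ![0,0])
    have hs2 := hFskew (Sum.elim ![0,0] ![0,1]) (Sum.elim ![(0:ℂ),1] ![0,0])
    have hs3 := hFskew (Sum.elim ![0,0] ![0,1]) (Sum.elim ![(1:ℂ),0] ![0,0])
    have hs4 := hFskew (Sum.elim ![0,0] ![1,0]) (Sum.elim ![(0:ℂ),1] ![0,0])
    have hs5 := hFskew (Sum.elim ![0,0] ![1,0]) (Sum.elim ![(0:ℂ),0] ![0,1])
    have hs6 := hFskew (Sum.elim ![1,0] ![0,0]) (Sum.elim ![(0:ℂ),1] ![0,0])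
    simp [Jmat, dotProduct, Matrix.mulVec, Fintype.sum_sum_type, Fin.sum_univ_two,
      Matrix.fromBlocks] at hd1 hd2 hd3 hd4 hc12 hc13 hc14 hc23 hc24 hc34 hs1 hs2 hs3 hs4 hs5 hs6
    ext i j
    rcases i with i | i <;> rcases j with j | j <;> fin_cases i <;> fin_cases j <;>
      simp [Matrix.fromBlocks]
    · linear_combination (hd1 + hd3 - hc13 + hs1)/2
    · linear_combination (hd2 + hd3 - hc23 + hs4)/2
    · linear_combination (hd1 + hd4 - hc14 + hs3)/2
    · linear_combination (hd2 + hd4 - hc24 + hs2)/2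
    · linear_combination -hd3
    · linear_combination (hd3 + hd4 - hc34 + hs5)/2
    · linear_combination (hd3 + hd4 - hc34 - hs5)/2
    · linear_combination -hd4
    · linear_combination hd1
    · linear_combination (hc12 - hd1 - hd2 + hs6)/2
    · linear_combination (hc12 - hd1 - hd2 - hs6)/2
    · linear_combination hd2
    · linear_combination (hs1 - hd1 - hd3 + hc13)/2
    · linear_combination (hs3 - hd1 - hd4 + hc14)/2
    · linear_combination (hs4 - hd2 - hd3 + hc23)/2
    · linear_combination (hs2 - hd2 - hd4 + hc24)/2
  -- Step 2: the real and imaginary parts of `F`.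
  have hre : F.map Complex.re =
      Matrix.fromBlocks 0 1 (-!![1,0;0,0]) 0 := by
    rw [hF]
    ext i j
    rcases i with i | i <;> rcases j with j | j <;> fin_cases i <;> fin_cases j <;>
      simp [Matrix.fromBlocks, Matrix.one_apply]
  have him : F.map Complex.im =
      Matrix.fromBlocks 0 0 (-!![α,β;β,γ]) 0 := by
    rw [hF]
    ext i j
    rcases i with i | i <;> rcases j with j | j <;> fin_cases i <;> fin_cases j <;>
      simp [Matrix.fromBlocks, Matrix.one_apply]
  -- Step 3: characterize membership in the singular space.
  have hH2 : (Matrix.fromBlocks 0 0 (-!![α,β;β,γ]) 0 :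
      Matrix (Fin 2 ⊕ Fin 2) (Fin 2 ⊕ Fin 2) ℝ) ^ 2 = 0 := by
    rw [sq]
    ext i j
    rcases i with i | i <;> rcases j with j | j <;>
      simp [Matrix.mul_apply, Fintype.sum_sum_type, Fin.sum_univ_two, Matrix.fromBlocks]
  have key : ∀ X : Fin 2 ⊕ Fin 2 → ℝ,
      (∀ k : ℕ, k ≤ 3 → (F.map Complex.re * (F.map Complex.im) ^ k) *ᵥ X = 0) ↔
      (X (Sum.inl 0) = 0 ∧ X (Sum.inr 0) = 0 ∧ X (Sum.inr 1) = 0 ∧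
        β * X (Sum.inl 1) = 0 ∧ γ * X (Sum.inl 1) = 0) := by
    intro X
    rw [hre, him]
    constructor
    · intro h
      have h0 := h 0 (by norm_num)
      have h1 := h 1 (by norm_num)
      rw [pow_zero, mul_one] at h0
      rw [pow_one] at h1
      have e1 := congrFun h0 (Sum.inl 0)
      have e2 := congrFun h0 (Sum.inl 1)
      have e3 := congrFun h0 (Sum.inr 0)
      have e4 := congrFun h1 (Sum.inl 0)
      have e5 := congrFun h1 (Sum.inl 1)
      simp [Matrix.mulVec, dotProduct, Matrix.mul_apply, Fintype.sum_sum_type,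
        Fin.sum_univ_two, Matrix.fromBlocks] at e1 e2 e3 e4 e5
      refine ⟨e3, e1, e2, ?_, ?_⟩
      · linear_combination -e4 - α * e3
      · linear_combination -e5 - β * e3
    · rintro ⟨h1, h2, h3, h4, h5⟩ k hk
      interval_cases k
      · rw [pow_zero, mul_one]
        funext i
        rcases i with i | i <;> fin_cases i <;>
          simp [Matrix.mulVec, dotProduct, Fintype.sum_sum_type,
            Fin.sum_univ_two, Matrix.fromBlocks, h1, h2, h3]
      · rw [pow_one]
        funext i
        rcases i with i | i <;> fin_cases i <;>
          simp [Matrix.mulVec, dotProduct, Matrix.mul_apply, Fintype.sum_sum_type,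
            Fin.sum_univ_two, Matrix.fromBlocks, h1, h2, h3] <;>
          first
          | exact mul_eq_zero.mp h4
          | exact mul_eq_zero.mp h5
      · rw [hH2, Matrix.mul_zero, Matrix.zero_mulVec]
      · have h3' : (Matrix.fromBlocks 0 0 (-!![α,β;β,γ]) 0 :
            Matrix (Fin 2 ⊕ Fin 2) (Fin 2 ⊕ Fin 2) ℝ) ^ 3 = 0 := by
          rw [pow_succ, hH2, Matrix.zero_mul]
        rw [h3', Matrix.mul_zero, Matrix.zero_mulVec]
  -- Step 4: conclude.
  constructor
  · constructor
    · intro hS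
      rintro ⟨hβ, hγ⟩
      have hmem : (Sum.elim ![0,1] ![0,0] : Fin 2 ⊕ Fin 2 → ℝ) ∈
          {X : Fin 2 ⊕ Fin 2 → ℝ | ∀ k : ℕ, k ≤ 3 →
            (F.map Complex.re * (F.map Complex.im) ^ k) *ᵥ X = 0} := by
        rw [Set.mem_setOf_eq, key]
        simp [hβ, hγ]
      rw [hS] at hmem
      have := congrFun hmem (Sum.inl 1)
      simp at this
    · intro hbg
      ext X
      simp only [Set.mem_setOf_eq, Set.mem_singleton_iff, key X]
      constructor
      · rintro ⟨h1, h2, h3, h4, h5⟩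
        have hx1 : X (Sum.inl 1) = 0 := by
          rcases not_and_or.mp hbg with hb | hg
          · exact (mul_eq_zero.mp h4).resolve_left hb
          · exact (mul_eq_zero.mp h5).resolve_left hg
        funext i
        rcases i with i | i <;> fin_cases i <;> simp [h1, h2, h3, hx1]
      · rintro rfl
        simp
  · intro hβ hγ
    ext X
    simp [Set.mem_setOf_eq, key X, hβ, hγ, and_assoc]
end
end
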